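/- arXiv:2005.13869 — 10 statements merged into one kernel-verified Lean document; each statement's English description precedes it below -/
import Mathlib

section
/- If q = p^a is a prime power and g is a q-cycle in S_q, then there is a unique Sylow p-subgroup of S_q containing g. -/
/-!
A `p`-subgroup `T` of `Sym(α)` containing a transitive permutation `g` of order `p^(m+1)`
centralizes `z = g^(p^m)`: the centralizer of `g` is `⟨g⟩`, so a nontrivial central element of `T`
is a nontrivial power of `g`, and the subgroup it generates contains the order-`p` subgroup `⟨z⟩`.
Hence `T` permutes the cycles of `z`, the kernel of this action has exponent `p`, and `g` acts
transitively on the (fewer) cycles. By induction on `|α|`, two `p`-subgroups containing `g` generate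
a `p`-group, so two Sylow `p`-subgroups containing `g` coincide.
-/

open Subgroup

theorem orderOf_pow_prime_pow {G : Type*} [Monoid G] {p m : ℕ} (hp : p ≠ 0) {g : G}
    (hg : orderOf g = p ^ (m + 1)) : orderOf (g ^ p ^ m) = p := by
  have := orderOf_pow_orderOf_div (x := g) (n := p) (by simp [hg, hp])
    (hg ▸ dvd_pow_self p m.succ_ne_zero)
  rwa [hg, pow_succ, Nat.mul_div_cancel _ (Nat.pos_of_ne_zero hp)] at this

theorem mem_zpowers_pow_of_pow_eq_one {G : Type*} [Group G] {p m : ℕ} (hp : p ≠ 0) {g c : G}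
    (hg : orderOf g = p ^ (m + 1)) (hc : c ∈ zpowers g) (hcp : c ^ p = 1) :
    c ∈ zpowers (g ^ p ^ m) := by
  obtain ⟨k, rfl⟩ := hc
  have hdvd : ((p ^ m : ℕ) : ℤ) * p ∣ k * p := by
    rw [← zpow_natCast, ← zpow_mul, ← orderOf_dvd_iff_zpow_eq_one, hg] at hcp
    simpa [pow_succ] using hcp
  obtain ⟨t, rfl⟩ := Int.dvd_of_mul_dvd_mul_right (by exact_mod_cast hp) hdvd
  exact ⟨t, by simp only [zpow_mul, zpow_natCast]⟩

theorem pow_mem_zpowers_of_mem_zpowers_of_ne_one {G : Type*} [Group G] {p m : ℕ} [Fact p.Prime]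
    {g c : G} (hg : orderOf g = p ^ (m + 1)) (hc : c ∈ zpowers g) (hc1 : c ≠ 1) :
    g ^ p ^ m ∈ zpowers c := by
  have hp := (Fact.out : p.Prime)
  have hz := orderOf_pow_prime_pow hp.ne_zero hg
  obtain ⟨j, -, hj⟩ := (Nat.dvd_prime_pow hp).mp (hg ▸ orderOf_dvd_of_mem_zpowers hc)
  have hj0 : j ≠ 0 := by rintro rfl; exact hc1 (orderOf_eq_one_iff.mp hj)
  set c' := c ^ (orderOf c / p)
  have hc' : orderOf c' = p :=
    orderOf_pow_orderOf_div (by simp [hj, hp.ne_zero]) (hj ▸ dvd_pow_self p hj0)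
  have hc'z : c' ∈ zpowers (g ^ p ^ m) :=
    mem_zpowers_pow_of_pow_eq_one hp.ne_zero hg (pow_mem hc _) (hc' ▸ pow_orderOf_eq_one c')
  have : Finite (zpowers (g ^ p ^ m)) :=
    Nat.finite_of_card_ne_zero (by rw [Nat.card_zpowers, hz]; exact hp.ne_zero)
  have heq : zpowers c' = zpowers (g ^ p ^ m) :=
    eq_of_le_of_card_ge (zpowers_le.mpr hc'z) (by rw [Nat.card_zpowers, Nat.card_zpowers, hc', hz])
  exact zpowers_le.mpr (pow_mem (mem_zpowers c) _) (heq ▸ mem_zpowers (g ^ p ^ m))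

theorem IsPGroup.exists_orderOf_eq_pow_succ {G : Type*} [Group G] {p : ℕ} [Fact p.Prime]
    (hG : IsPGroup p G) {g : G} (hg : g ≠ 1) : ∃ m, orderOf g = p ^ (m + 1) := by
  obtain ⟨_ | m, hm⟩ := IsPGroup.iff_orderOf.mp hG g
  · exact absurd (orderOf_eq_one_iff.mp hm) hg
  · exact ⟨m, hm⟩

theorem IsPGroup.le_centralizer_pow {G : Type*} [Group G] {p m : ℕ} [Fact p.Prime]
    {T : Subgroup G} [Finite T] (hT : IsPGroup p T) {g : G} (hgT : g ∈ T)
    (hcent : centralizer {g} ≤ zpowers g) (hg : orderOf g = p ^ (m + 1)) :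
    T ≤ centralizer {g ^ p ^ m} := by
  have hg1 : (⟨g, hgT⟩ : T) ≠ 1 := by
    rw [Ne, ← orderOf_eq_one_iff, orderOf_mk, hg]
    exact (Nat.one_lt_pow (Nat.succ_ne_zero m) (Fact.out : p.Prime).one_lt).ne'
  have : Nontrivial T := ⟨⟨_, _, hg1⟩⟩
  have := hT.center_nontrivial
  obtain ⟨⟨c, hcZ⟩, hc1⟩ := exists_ne (1 : center T)
  have hcomm : ∀ t ∈ T, Commute t c := fun t ht =>
    congrArg Subtype.val (mem_center_iff.mp hcZ ⟨t, ht⟩)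
  have hcg : (c : G) ∈ zpowers g := hcent (mem_centralizer_singleton_iff.mpr (hcomm g hgT).symm)
  obtain ⟨k, hk⟩ := pow_mem_zpowers_of_mem_zpowers_of_ne_one hg hcg (by simpa using hc1)
  intro t ht
  rw [mem_centralizer_singleton_iff, ← hk]
  exact ((hcomm t ht).zpow_right k).eq

namespace Equiv.Perm

variable {α : Type*}

theorem eq_one_of_commute_of_apply_eq_self {g σ : Perm α} (hg : ∀ x y, g.SameCycle x y)
    (hσ : Commute σ g) {x : α} (hx : σ x = x) : σ = 1 := by
  ext y
  obtain ⟨k, rfl⟩ := hg x y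
  change (σ * g ^ k) x = (g ^ k) x
  rw [(hσ.zpow_right k).eq, mul_apply, hx]

theorem mem_zpowers_of_commute {g σ : Perm α} (hg : ∀ x y, g.SameCycle x y)
    (hσ : Commute σ g) : σ ∈ zpowers g := by
  cases isEmpty_or_nonempty α
  · exact Subsingleton.elim 1 σ ▸ one_mem _
  obtain ⟨x⟩ := ‹Nonempty α›
  obtain ⟨k, hk⟩ := hg x (σ x)
  have : (g ^ k)⁻¹ * σ = 1 :=
    eq_one_of_commute_of_apply_eq_self hg (((Commute.refl g).zpow_left k).inv_left.mul_left hσ)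
      (by rw [mul_apply, ← hk, ← mul_apply, inv_mul_cancel, one_apply])
  exact ⟨k, inv_mul_eq_one.mp this⟩

theorem pow_card_eq_one_of_forall_sameCycle [Finite α] {g : Perm α}
    (hg : ∀ x y, g.SameCycle x y) : g ^ Nat.card α = 1 := by
  cases isEmpty_or_nonempty α
  · exact Subsingleton.elim _ _
  obtain ⟨x⟩ := ‹Nonempty α›
  have horbit : ∀ y, y ∈ MulAction.orbit (zpowers g) x := fun y => by
    obtain ⟨k, rfl⟩ := hg x y
    exact ⟨⟨g ^ k, zpow_mem_zpowers g k⟩, rfl⟩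
  have := Fintype.ofFinite (MulAction.orbit (zpowers g) x)
  refine eq_one_of_commute_of_apply_eq_self hg ((Commute.refl g).pow_left _)
    (x := x) (Perm.smul_def (g ^ _) x ▸ MulAction.pow_smul_eq_iff_minimalPeriod_dvd.mpr ?_)
  rw [MulAction.minimalPeriod_eq_card, ← Nat.card_eq_fintype_card,
    Nat.card_congr (Equiv.subtypeUnivEquiv horbit)]

theorem sameCycle_apply_iff_of_commute {f σ : Perm α} (hσ : Commute σ f) {x y : α} :
    f.SameCycle (σ x) (σ y) ↔ f.SameCycle x y := by
  have h := sameCycle_conj (f := f) (g := σ) (x := σ x) (y := σ y)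
  rwa [hσ.eq, mul_inv_cancel_right, ← mul_apply, ← mul_apply, inv_mul_cancel, one_apply,
    one_apply] at h

def cyclesPerm (f : Perm α) : centralizer {f} →* Perm (Quotient (SameCycle.setoid f)) where
  toFun σ := Quotient.congr σ.1 fun _ _ =>
    (sameCycle_apply_iff_of_commute (mem_centralizer_singleton_iff.mp σ.2)).symm
  map_one' := by ext ⟨x⟩; rfl
  map_mul' _ _ := by ext ⟨x⟩; rfl

theorem cyclesPerm_mk (f : Perm α) (σ : centralizer {f}) (x : α) :
    cyclesPerm f σ ⟦x⟧ = ⟦σ.1 x⟧ := rfl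

theorem pow_eq_one_of_mem_ker_cyclesPerm {f : Perm α} {n : ℕ} (hf : f ^ n = 1)
    {σ : centralizer {f}} (hσ : σ ∈ (cyclesPerm f).ker) : σ ^ n = 1 := by
  ext x
  obtain ⟨k, hk⟩ : f.SameCycle x (σ.1 x) := Quotient.exact (congrArg (· ⟦x⟧) hσ).symm
  have hσf : Commute σ.1 f := mem_centralizer_singleton_iff.mp σ.2
  have hcomm : Commute (f ^ k)⁻¹ σ.1 := (hσf.symm.zpow_left k).inv_left
  have hfix : ((f ^ k)⁻¹ * σ.1) x = x := by
    rw [mul_apply, ← hk, ← mul_apply, inv_mul_cancel, one_apply]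
  have hσn : σ.1 ^ n = ((f ^ k)⁻¹ * σ.1) ^ n := by
    rw [hcomm.mul_pow, inv_pow, ← zpow_natCast (f ^ k), ← zpow_mul, mul_comm, zpow_mul,
      zpow_natCast, hf, one_zpow, inv_one, one_mul]
  simpa [hσn] using pow_apply_eq_self_of_apply_eq_self hfix n

theorem sameCycle_cyclesPerm {f g : Perm α} (hgf : g ∈ centralizer {f})
    (hg : ∀ x y, g.SameCycle x y) (X Y : Quotient (SameCycle.setoid f)) :
    (cyclesPerm f ⟨g, hgf⟩).SameCycle X Y := by
  induction X using Quotient.ind with | _ x => ?_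
  induction Y using Quotient.ind with | _ y => ?_
  obtain ⟨k, rfl⟩ := hg x y
  exact ⟨k, by rw [← map_zpow, cyclesPerm_mk]; rfl⟩

theorem card_quotient_sameCycle_lt [Finite α] {f : Perm α} (hf : f ≠ 1) :
    Nat.card (Quotient (SameCycle.setoid f)) < Nat.card α := by
  obtain ⟨x, hx⟩ : ∃ x, f x ≠ x := by simpa [Perm.ext_iff] using hf
  have := Fintype.ofFinite α
  have := Fintype.ofFinite (Quotient (SameCycle.setoid f))
  simp only [Nat.card_eq_fintype_card]
  refine Fintype.card_lt_of_surjective_not_injective _ Quotient.mk_surjective fun hinj => hx ?_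
  exact (hinj (Quotient.sound (sameCycle_apply_right.mpr (SameCycle.refl f x)))).symm

theorem isPGroup_sup_of_forall_sameCycle {p : ℕ} [Fact p.Prime] [Finite α] {g : Perm α}
    (hg : ∀ x y, g.SameCycle x y) {R S : Subgroup (Perm α)} (hR : IsPGroup p R)
    (hS : IsPGroup p S) (hgR : g ∈ R) (hgS : g ∈ S) : IsPGroup p (R ⊔ S : Subgroup (Perm α)) := by
  induction h : Nat.card α using Nat.strong_induction_on generalizing α with | _ n ih => ?_
  subst h
  obtain rfl | hg1 := eq_or_ne g 1
  · have : Subsingleton α := ⟨fun x y => sameCycle_one.mp (hg x y)⟩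
    exact IsPGroup.of_subsingleton _ _
  obtain ⟨m, hm⟩ := hR.exists_orderOf_eq_pow_succ (g := ⟨g, hgR⟩) (by simpa using hg1)
  rw [orderOf_mk] at hm
  set z := g ^ p ^ m
  have hz : orderOf z = p := orderOf_pow_prime_pow (Fact.out : p.Prime).ne_zero hm
  have hcent : centralizer {g} ≤ zpowers g := fun σ hσ =>
    mem_zpowers_of_commute hg (mem_centralizer_singleton_iff.mp hσ)
  have hRz := hR.le_centralizer_pow hgR hcent hm
  have hSz := hS.le_centralizer_pow hgS hcent hm
  have hgz : g ∈ centralizer {z} := hRz hgR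
  set π := cyclesPerm z
  have hz1 : z ≠ 1 := fun h => (Fact.out : p.Prime).one_lt.ne' (by rw [← hz, h, orderOf_one])
  have hquot := ih _ (card_quotient_sameCycle_lt hz1) (sameCycle_cyclesPerm hgz hg)
    (hR.comap_subtype.map π) (hS.comap_subtype.map π) ⟨⟨g, hgz⟩, hgR, rfl⟩ ⟨⟨g, hgz⟩, hgS, rfl⟩ rfl
  have hker : IsPGroup p π.ker := fun σ =>
    ⟨1, Subtype.ext <| by
      rw [pow_one]; exact pow_eq_one_of_mem_ker_cyclesPerm (hz ▸ pow_orderOf_eq_one z) σ.2⟩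
  refine ((hquot.comap_of_ker_isPGroup π hker).map (centralizer {z}).subtype).to_le (sup_le ?_ ?_)
  · exact fun x hx => ⟨⟨x, hRz hx⟩, mem_sup_left ⟨⟨x, hRz hx⟩, hx, rfl⟩, rfl⟩
  · exact fun x hx => ⟨⟨x, hSz hx⟩, mem_sup_right ⟨⟨x, hSz hx⟩, hx, rfl⟩, rfl⟩

end Equiv.Perm

theorem unique_sylow_containing_q_cycle_general (p a : ℕ) (hp : p.Prime)
    (q : ℕ) (hq : q = p ^ a) (g : Equiv.Perm (Fin q))
    (hg : ∀ x y : Fin q, g.SameCycle x y) :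
    ∃! P : Sylow p (Equiv.Perm (Fin q)), g ∈ P := by
  have := Fact.mk hp
  have hgq : g ^ p ^ a = 1 := by
    simpa [hq] using Equiv.Perm.pow_card_eq_one_of_forall_sameCycle hg
  obtain ⟨P, hP⟩ := (IsPGroup.of_card_dvd_pow (n := a)
    ((Nat.card_zpowers g).symm ▸ orderOf_dvd_of_pow_eq_one hgq)).exists_le_sylow
  refine ⟨P, hP (mem_zpowers g), fun Q hQ => Sylow.ext ?_⟩
  have hPQ := Equiv.Perm.isPGroup_sup_of_forall_sameCycle hg Q.isPGroup' P.isPGroup' hQ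
    (hP (mem_zpowers g))
  exact (Q.is_maximal' hPQ le_sup_left).symm.trans (P.is_maximal' hPQ le_sup_right)

theorem unique_sylow_containing_q_cycle (p a : ℕ) (hp : p.Prime) (ha : 0 < a)
    (q : ℕ) (hq : q = p ^ a) (g : Equiv.Perm (Fin q))
    (hg : ∀ x y : Fin q, g.SameCycle x y) :
    ∃! P : Sylow p (Equiv.Perm (Fin q)), g ∈ P :=
  unique_sylow_containing_q_cycle_general p a hp q hq g hg
end

section
/- Any two q-cycles contained in a Sylow p-subgroup P of S_q, where q = p^a, are conjugate by an element of the normalizer of P in S_q. -/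
/-!
Two `q`-cycles are conjugate, say `h = x g x⁻¹`; then `h` lies in both `P` and `x P x⁻¹`, so it
suffices that a `q`-cycle lies in a unique Sylow `p`-subgroup. We show more: the `p`-subgroups
containing the cycle `c : x ↦ x + 1` of `ZMod (p ^ (b + 1))` have a greatest element. The centre
of such a `p`-subgroup is a nontrivial subgroup of `⟨c⟩` (the centraliser of `c`), hence contains
`z = c ^ p ^ b`, so the subgroup centralises `z`. Permutations commuting with `z` permute the
residue classes modulo `p ^ b`; the resulting map to `Perm (ZMod (p ^ b))` sends `c` to the
standard cycle and has a kernel of exponent `p`. So by induction the `p`-subgroups containing `c`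
all lie in the preimage of the greatest `p`-subgroup containing the smaller cycle, a `p`-group.
-/

open Equiv Equiv.Perm Subgroup

section CyclicPGroup

variable {G : Type*} [Group G] {p : ℕ}

theorem pow_prime_pow_mem_zpowers (hp : p.Prime) {b : ℕ} {c w : G} (hc : c ^ p ^ (b + 1) = 1)
    (hw : w ∈ zpowers c) (hw1 : w ≠ 1) : c ^ p ^ b ∈ zpowers w := by
  obtain ⟨k, rfl⟩ := mem_zpowers_iff.mp hw
  set d := Int.gcd k (p ^ (b + 1) : ℕ)
  have hcd : c ^ (d : ℤ) ∈ zpowers (c ^ k) := by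
    rw [Int.gcd_eq_gcd_ab, zpow_add, zpow_mul, zpow_mul, zpow_natCast, hc, one_zpow, mul_one]
    exact zpow_mem (mem_zpowers _) _
  obtain ⟨i, hi, hdi⟩ : ∃ i ≤ b + 1, d = p ^ i := (Nat.dvd_prime_pow hp).mp
    (Int.natCast_dvd_natCast.mp (Int.gcd_dvd_right k (p ^ (b + 1) : ℕ)))
  have hib : i ≤ b := by
    refine Nat.le_of_lt_succ (lt_of_le_of_ne hi fun hib => hw1 ?_)
    obtain ⟨m, hm⟩ : ((p ^ (b + 1) : ℕ) : ℤ) ∣ k := by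
      rw [← Nat.succ_eq_add_one, ← hib, ← hdi]
      exact Int.gcd_dvd_left k _
    rw [hm, zpow_mul, zpow_natCast, hc, one_zpow]
  obtain ⟨m, hm⟩ : d ∣ p ^ b := by
    rw [hdi]
    exact pow_dvd_pow p hib
  rw [hm, pow_mul, ← zpow_natCast c d]
  exact pow_mem hcd m

theorem IsPGroup.le_centralizer_pow_prime_pow [Finite G] [Fact p.Prime] {Q : Subgroup G}
    (hQ : IsPGroup p Q) {b : ℕ} {c : G} (hcQ : c ∈ Q) (hc1 : c ≠ 1)
    (hcent : centralizer {c} ≤ zpowers c) (hc : c ^ p ^ (b + 1) = 1) :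
    Q ≤ centralizer {c ^ p ^ b} := by
  have : Nontrivial Q := ⟨⟨⟨c, hcQ⟩, 1, fun h => hc1 (congrArg Subtype.val h)⟩⟩
  have := hQ.center_nontrivial
  obtain ⟨w, hw1⟩ := exists_ne (1 : center Q)
  have hwQ : ((w : Q) : G) ∈ centralizer Q := fun u hu =>
    congrArg Subtype.val (mem_center_iff.mp w.2 ⟨u, hu⟩)
  have hwc : ((w : Q) : G) ∈ centralizer {c} :=
    mem_centralizer_singleton_iff.mpr (hwQ c hcQ).symm
  have hz := pow_prime_pow_mem_zpowers Fact.out hc (hcent hwc) fun h =>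
    hw1 (Subtype.ext (Subtype.ext h))
  calc Q ≤ centralizer (zpowers ((w : Q) : G)) := le_centralizer_iff.mpr (zpowers_le.mpr hwQ)
    _ ≤ centralizer {c ^ p ^ b} := centralizer_le (Set.singleton_subset_iff.mpr hz)

end CyclicPGroup

section FiberPerm

variable {α β : Type*} {f : α → β} (hf : Function.Surjective f) {K : Subgroup (Perm α)}
  (hK : ∀ σ ∈ K, ∀ x y, f x = f y → f (σ x) = f (σ y))

noncomputable def fiberPermHom : K →* Perm β :=
  letI : MulAction K β :=
    { smul := fun σ r => f ((σ : Perm α) (Function.surjInv hf r))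
      one_smul := Function.surjInv_eq hf
      mul_smul := fun σ _ _ =>
        hK σ σ.2 _ _ (Function.surjInv_eq hf _).symm }
  MulAction.toPermHom K β

theorem fiberPermHom_apply_apply (σ : K) (x : α) :
    fiberPermHom hf hK σ (f x) = f ((σ : Perm α) x) :=
  hK σ σ.2 _ _ (Function.surjInv_eq hf (f x))

end FiberPerm

namespace Equiv.Perm

variable {α : Type*}

theorem SameCycle.apply_of_commute {σ z : Perm α} (hσz : Commute σ z) {x y : α}
    (h : z.SameCycle x y) : z.SameCycle (σ x) (σ y) := by
  simpa [hσz.eq] using h.conj (g := σ)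

theorem pow_eq_one_of_commute_of_sameCycle {σ z : Perm α} {n : ℕ} (hσz : Commute σ z)
    (hσ : ∀ x, z.SameCycle x (σ x)) (hz : z ^ n = 1) : σ ^ n = 1 := by
  ext x
  obtain ⟨k, hk⟩ := hσ x
  have hpow : ∀ j : ℕ, (σ ^ j) x = (z ^ (k * j)) x := by
    intro j
    induction j with
    | zero => simp
    | succ j ih =>
      rw [pow_succ', mul_apply, ih, ← mul_apply, (hσz.zpow_right _).eq, mul_apply, ← hk,
        ← mul_apply, ← zpow_add]
      push_cast
      ring_nf
  rw [hpow, mul_comm, zpow_mul, zpow_natCast, hz, one_zpow]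

theorem apply_ne_self_of_forall_sameCycle [Nontrivial α] {σ : Perm α}
    (hσ : ∀ x y, σ.SameCycle x y) (x : α) : σ x ≠ x := fun hx =>
  have ⟨y, hy⟩ := exists_ne x
  hy ((hσ x y).eq_of_left hx).symm

theorem isConj_of_forall_sameCycle [Fintype α] [DecidableEq α] {σ τ : Perm α}
    (hσ : ∀ x y, σ.SameCycle x y) (hτ : ∀ x y, τ.SameCycle x y) : IsConj σ τ := by
  rcases subsingleton_or_nontrivial α with _ | _
  · rw [Subsingleton.elim σ τ]
  obtain ⟨x⟩ : Nonempty α := inferInstance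
  have hcycle {π : Perm α} (hπ : ∀ x y, π.SameCycle x y) : π.IsCycle :=
    ⟨x, apply_ne_self_of_forall_sameCycle hπ x, fun y _ => hπ x y⟩
  have hsupport {π : Perm α} (hπ : ∀ x y, π.SameCycle x y) : π.support = Finset.univ :=
    Finset.eq_univ_of_forall fun y => mem_support.mpr (apply_ne_self_of_forall_sameCycle hπ y)
  exact (hcycle hσ).isConj (hcycle hτ) (by rw [hsupport hσ, hsupport hτ])

theorem forall_sameCycle_permCongrHom {β : Type*} (e : α ≃ β) {σ : Perm α}
    (hσ : ∀ x y, σ.SameCycle x y) (x y : β) : (e.permCongrHom σ).SameCycle x y := by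
  obtain ⟨i, hi⟩ := hσ (e.symm x) (e.symm y)
  refine ⟨i, ?_⟩
  rw [← map_zpow]
  show e ((σ ^ i) (e.symm x)) = y
  rw [hi, apply_symm_apply]

end Equiv.Perm

namespace ZMod

variable {n : ℕ}

theorem addRight_one_pow (k : ℕ) :
    Equiv.addRight (1 : ZMod n) ^ k = Equiv.addRight (k : ZMod n) := by
  rw [nsmul_addRight, nsmul_one]

theorem addRight_natCast_eq_one_iff {k : ℕ} : Equiv.addRight (k : ZMod n) = 1 ↔ n ∣ k := by
  rw [← natCast_eq_zero_iff]
  constructor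
  · intro h
    simpa using congrArg (· 0) h
  · intro h
    ext x
    simp [h]

theorem addRight_one_ne_one (hn : 1 < n) : Equiv.addRight (1 : ZMod n) ≠ 1 := by
  rw [← Nat.cast_one, Ne, addRight_natCast_eq_one_iff]
  exact Nat.not_dvd_of_pos_of_lt one_pos hn

theorem sameCycle_addRight_one (x y : ZMod n) : (Equiv.addRight (1 : ZMod n)).SameCycle x y := by
  obtain ⟨k, hk⟩ := intCast_surjective (y - x)
  exact ⟨k, by simp [zsmul_addRight, hk]⟩

theorem centralizer_addRight_one_le :
    centralizer {Equiv.addRight (1 : ZMod n)} ≤ zpowers (Equiv.addRight 1) := by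
  intro σ hσ
  have hσ' (k : ℤ) : σ k = σ 0 + k := by
    simpa [zsmul_addRight] using
      congrArg (· 0) ((Commute.zpow_right (mem_centralizer_singleton_iff.mp hσ) k).eq)
  obtain ⟨a, ha⟩ := intCast_surjective (σ 0)
  refine ⟨a, ?_⟩
  ext x
  obtain ⟨k, rfl⟩ := intCast_surjective x
  simpa [zsmul_addRight, ha, add_comm] using (hσ' k).symm

variable {m : ℕ} (h : m ∣ n)

theorem castHom_eq_castHom_iff_sameCycle (x y : ZMod n) :
    castHom h (ZMod m) x = castHom h (ZMod m) y ↔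
      (Equiv.addRight (m : ZMod n)).SameCycle x y := by
  obtain ⟨X, rfl⟩ := intCast_surjective x
  obtain ⟨Y, rfl⟩ := intCast_surjective y
  simp only [map_intCast, SameCycle, zsmul_addRight, coe_addRight, zsmul_eq_mul,
    intCast_eq_intCast_iff_dvd_sub]
  constructor
  · rintro ⟨i, hi⟩
    exact ⟨i, by rw [eq_add_of_sub_eq' hi]; push_cast; ring⟩
  · rintro ⟨i, hi⟩
    rw [← Int.cast_natCast, ← Int.cast_mul, ← Int.cast_add,
      intCast_eq_intCast_iff_dvd_sub] at hi
    have := (Int.natCast_dvd_natCast.mpr h).trans hi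
    rw [show Y - X = Y - (X + i * m) + i * m by ring]
    exact this.add (dvd_mul_left _ _)

/-- The residue classes modulo `m` are the orbits of `x ↦ x + m`, so the permutations commuting
with it permute them. -/
noncomputable def permReduceHom : centralizer {Equiv.addRight (m : ZMod n)} →* Perm (ZMod m) :=
  fiberPermHom (castHom_surjective h) fun _ hσ x y hxy =>
    (castHom_eq_castHom_iff_sameCycle h _ _).mpr <|
      ((castHom_eq_castHom_iff_sameCycle h x y).mp hxy).apply_of_commute
        (mem_centralizer_singleton_iff.mp hσ)

theorem permReduceHom_apply_castHom (σ : centralizer {Equiv.addRight (m : ZMod n)}) (x : ZMod n) :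
    permReduceHom h σ (castHom h (ZMod m) x) = castHom h (ZMod m) ((σ : Perm (ZMod n)) x) :=
  fiberPermHom_apply_apply _ _ σ x

theorem addRight_one_mem_centralizer (a : ZMod n) :
    Equiv.addRight 1 ∈ centralizer {Equiv.addRight a} :=
  mem_centralizer_singleton_iff.mpr <| by ext x; exact add_right_comm x a 1

theorem permReduceHom_addRight_one :
    permReduceHom h ⟨Equiv.addRight 1, addRight_one_mem_centralizer (m : ZMod n)⟩ =
      Equiv.addRight 1 := by
  ext r
  obtain ⟨x, rfl⟩ := castHom_surjective h r
  rw [permReduceHom_apply_castHom]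
  exact (map_add _ x 1).trans (congrArg _ (map_one _))

theorem isPGroup_ker_permReduceHom {p : ℕ} (hn : n ∣ m * p) :
    IsPGroup p (permReduceHom h).ker := by
  rintro ⟨σ, hσ⟩
  refine ⟨1, Subtype.ext (Subtype.ext ?_)⟩
  have hfix (x : ZMod n) : castHom h (ZMod m) ((σ : Perm (ZMod n)) x) = castHom h (ZMod m) x := by
    rw [← permReduceHom_apply_castHom, MonoidHom.mem_ker.mp hσ, one_apply]
  refine pow_eq_one_of_commute_of_sameCycle (mem_centralizer_singleton_iff.mp σ.2)
    (fun x => (castHom_eq_castHom_iff_sameCycle h _ _).mp (hfix x).symm) ?_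
  rw [pow_one, nsmul_addRight, nsmul_eq_mul, ← Nat.cast_mul, addRight_natCast_eq_one_iff,
    mul_comm]
  exact hn

end ZMod

section SylowOfCycle

variable {p : ℕ}

theorem isGreatest_pSubgroups_map {G G' : Type*} [Group G] [Group G'] (F : G ≃* G') {g : G}
    {H : Subgroup G} (hH : IsGreatest {Q : Subgroup G | IsPGroup p Q ∧ g ∈ Q} H) :
    IsGreatest {Q : Subgroup G' | IsPGroup p Q ∧ F g ∈ Q} (H.map F.toMonoidHom) := by
  refine ⟨⟨hH.1.1.map _, mem_map_of_mem _ hH.1.2⟩, fun Q ⟨hQ, hgQ⟩ => ?_⟩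
  have hle : Q.comap F.toMonoidHom ≤ H :=
    hH.2 ⟨hQ.comap_of_injective _ F.injective, by simpa using hgQ⟩
  intro x hx
  exact ⟨F.symm x, hle (by simpa using hx), by simp⟩

variable [Fact p.Prime]

theorem exists_isGreatest_addRight_one (n : ℕ) :
    ∃ H : Subgroup (Perm (ZMod (p ^ n))),
      IsGreatest {Q : Subgroup (Perm (ZMod (p ^ n))) | IsPGroup p Q ∧ Equiv.addRight 1 ∈ Q}
        H := by
  induction n with
  | zero =>
    have : Subsingleton (ZMod (p ^ 0)) := by rw [pow_zero]; infer_instance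
    exact ⟨⊤, ⟨fun _ => ⟨0, Subsingleton.elim _ _⟩, mem_top _⟩, fun _ _ => le_top⟩
  | succ b ih =>
    obtain ⟨H, hH⟩ := ih
    have hdvd : p ^ b ∣ p ^ (b + 1) := pow_dvd_pow p b.le_succ
    set K := centralizer {Equiv.addRight ((p ^ b : ℕ) : ZMod (p ^ (b + 1)))}
    set ψ := ZMod.permReduceHom hdvd
    set c : K := ⟨Equiv.addRight 1, ZMod.addRight_one_mem_centralizer _⟩
    have hψc : ψ c ∈ H := by
      rw [ZMod.permReduceHom_addRight_one]
      exact hH.1.2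
    have hle_K {Q : Subgroup (Perm (ZMod (p ^ (b + 1))))} (hQ : IsPGroup p Q)
        (hcQ : Equiv.addRight 1 ∈ Q) : Q ≤ K := by
      have := hQ.le_centralizer_pow_prime_pow hcQ
        (ZMod.addRight_one_ne_one (Nat.one_lt_pow b.succ_ne_zero (Fact.out : p.Prime).one_lt))
        ZMod.centralizer_addRight_one_le
        (by rw [ZMod.addRight_one_pow, ZMod.addRight_natCast_eq_one_iff])
      rwa [ZMod.addRight_one_pow] at this
    refine ⟨(H.comap ψ).map K.subtype, ⟨?_, c, hψc, rfl⟩, fun Q ⟨hQ, hcQ⟩ => ?_⟩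
    · exact (hH.1.1.comap_of_ker_isPGroup ψ
        (ZMod.isPGroup_ker_permReduceHom hdvd (pow_succ p b).dvd)).map _
    have hQH : (Q.subgroupOf K).map ψ ≤ H :=
      hH.2 ⟨hQ.comap_subtype.map ψ, c, mem_subgroupOf.mpr hcQ,
        ZMod.permReduceHom_addRight_one _⟩
    intro σ hσ
    exact ⟨⟨σ, hle_K hQ hcQ hσ⟩, hQH ⟨_, mem_subgroupOf.mpr hσ, rfl⟩, rfl⟩

theorem exists_isGreatest_of_forall_sameCycle {α : Type*} [Fintype α] [DecidableEq α] {n : ℕ}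
    (hα : Fintype.card α = p ^ n) {c : Perm α} (hc : ∀ x y, c.SameCycle x y) :
    ∃ H : Subgroup (Perm α),
      IsGreatest {Q : Subgroup (Perm α) | IsPGroup p Q ∧ c ∈ Q} H := by
  obtain ⟨H, hH⟩ := exists_isGreatest_addRight_one (p := p) n
  let e : ZMod (p ^ n) ≃ α := Fintype.equivOfCardEq (by rw [ZMod.card, hα])
  obtain ⟨x, hx⟩ := isConj_iff.mp
    (isConj_of_forall_sameCycle (forall_sameCycle_permCongrHom e ZMod.sameCycle_addRight_one) hc)
  rw [← hx]
  exact ⟨_, isGreatest_pSubgroups_map (MulAut.conj x) (isGreatest_pSubgroups_map _ hH)⟩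

theorem Sylow.eq_of_forall_sameCycle {α : Type*} [Fintype α] [DecidableEq α] {n : ℕ}
    (hα : Fintype.card α = p ^ n) {c : Perm α} (hc : ∀ x y, c.SameCycle x y)
    {P Q : Sylow p (Perm α)} (hP : c ∈ P) (hQ : c ∈ Q) : P = Q := by
  obtain ⟨H, hH⟩ := exists_isGreatest_of_forall_sameCycle hα hc
  exact Sylow.ext <| (P.3 hH.1.1 (hH.2 ⟨P.2, hP⟩)).symm.trans (Q.3 hH.1.1 (hH.2 ⟨Q.2, hQ⟩))

end SylowOfCycle

theorem q_cycles_conjugate_in_normalizer_general (p a : ℕ) (hp : p.Prime)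
    (q : ℕ) (hq : q = p ^ a) (P : Sylow p (Equiv.Perm (Fin q)))
    (g h : Equiv.Perm (Fin q)) (hgP : g ∈ P) (hhP : h ∈ P)
    (hg : ∀ x y : Fin q, g.SameCycle x y) (hh : ∀ x y : Fin q, h.SameCycle x y) :
    ∃ k ∈ Subgroup.normalizer (P : Subgroup (Equiv.Perm (Fin q))),
      k⁻¹ * g * k = h := by
  have : Fact p.Prime := ⟨hp⟩
  obtain ⟨x, rfl⟩ := isConj_iff.mp (isConj_of_forall_sameCycle hg hh)
  have hxP : x • P = P := Sylow.eq_of_forall_sameCycle (by rw [Fintype.card_fin, hq]) hh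
    (smul_mem_pointwise_smul g (MulAut.conj x) (P : Subgroup _) hgP) hhP
  exact ⟨x⁻¹, inv_mem (Sylow.smul_eq_iff_mem_normalizer.mp hxP), by group⟩

theorem q_cycles_conjugate_in_normalizer (p a : ℕ) (hp : p.Prime) (ha : 0 < a)
    (q : ℕ) (hq : q = p ^ a) (P : Sylow p (Equiv.Perm (Fin q)))
    (g h : Equiv.Perm (Fin q)) (hgP : g ∈ P) (hhP : h ∈ P)
    (hg : ∀ x y : Fin q, g.SameCycle x y) (hh : ∀ x y : Fin q, h.SameCycle x y) :
    ∃ k ∈ Subgroup.normalizer (P : Subgroup (Equiv.Perm (Fin q))),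
      k⁻¹ * g * k = h :=
  q_cycles_conjugate_in_normalizer_general p a hp q hq P g h hgP hhP hg hh
end

section
/- If g is a t-cycle in S_t and N is a nilpotent subgroup of S_t containing g, then each Sylow subgroup of N preserves the partition of {1,...,t} into orbits of g^{t/q} for the corresponding prime power q: identifying {1,...,t} with Z/tZ so that g is translation by 1, and writing t = q_1⋯q_ℓ as a product of prime powers for distinct primes p_1,...,p_ℓ, every element h of the Sylow p_j-subgroup of N fixes all coordinates other than the j-th under the CRT identification Z/tZ ≅ Z/q_1Z × ⋯ × Z/q_ℓZ. -/
/-!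
Since `N` is nilpotent, its Sylow `p_j`-subgroup `P` is normal in `N`; it is therefore normalized
by every translation `x ↦ x + c`, these being powers of `g`. Consequently the `P`-orbits are the
cosets of the `P`-orbit of `0`, an additive subgroup of `ZMod t` whose order divides `|P|`, a power
of `p_j`. So `h x - x` is killed by a power of `p_j`, which is a unit modulo `q_i` for `i ≠ j`.
-/

open MulAction Subgroup

namespace Equiv.Perm

variable {G : Type*} [AddGroup G] {Q : Subgroup (Perm G)}

theorem add_mem_orbit_add (hQ : ∀ c : G, Equiv.addLeft c ∈ normalizer (Q : Set (Perm G)))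
    {x y : G} (hy : y ∈ orbit Q x) (c : G) : c + y ∈ orbit Q (c + x) := by
  obtain ⟨⟨σ, hσ⟩, rfl⟩ := hy
  refine ⟨⟨Equiv.addLeft c * σ * (Equiv.addLeft c)⁻¹, (mem_normalizer_iff.mp (hQ c) σ).mp hσ⟩, ?_⟩
  simp [Subgroup.smul_def, Perm.mul_apply]

def orbitZeroAddSubgroup (hQ : ∀ c : G, Equiv.addLeft c ∈ normalizer (Q : Set (Perm G))) :
    AddSubgroup G where
  carrier := orbit Q 0
  zero_mem' := mem_orbit_self 0
  add_mem' {y z} hy hz := by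
    have := add_mem_orbit_add hQ hz y
    rwa [add_zero, orbit_eq_iff.mpr hy] at this
  neg_mem' {y} hy := by
    have := add_mem_orbit_add hQ (orbit_eq_iff.mpr hy ▸ mem_orbit_self (0 : G)) (-y)
    rwa [add_zero, neg_add_cancel] at this

theorem neg_add_mem_orbitZeroAddSubgroup
    (hQ : ∀ c : G, Equiv.addLeft c ∈ normalizer (Q : Set (Perm G)))
    {σ : Perm G} (hσ : σ ∈ Q) (x : G) : -x + σ x ∈ orbitZeroAddSubgroup hQ := by
  have := add_mem_orbit_add hQ (mem_orbit x (⟨σ, hσ⟩ : Q)) (-x)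
  rwa [neg_add_cancel] at this

theorem card_orbitZeroAddSubgroup_dvd
    (hQ : ∀ c : G, Equiv.addLeft c ∈ normalizer (Q : Set (Perm G))) :
    Nat.card (orbitZeroAddSubgroup hQ) ∣ Nat.card Q := by
  have : Nat.card (orbitZeroAddSubgroup hQ) = (stabilizer Q (0 : G)).index := by
    rw [index_stabilizer]; rfl
  exact this ▸ index_dvd_card _

theorem card_nsmul_neg_add_eq_zero
    (hQ : ∀ c : G, Equiv.addLeft c ∈ normalizer (Q : Set (Perm G)))
    {σ : Perm G} (hσ : σ ∈ Q) (x : G) : Nat.card Q • (-x + σ x) = 0 :=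
  addOrderOf_dvd_iff_nsmul_eq_zero.mp <|
    ((orbitZeroAddSubgroup hQ).addOrderOf_dvd_natCard
      (neg_add_mem_orbitZeroAddSubgroup hQ hσ x)).trans (card_orbitZeroAddSubgroup_dvd hQ)

end Equiv.Perm

theorem ZMod.addLeft_mem_of_addLeft_one_mem {n : ℕ} {N : Subgroup (Equiv.Perm (ZMod n))}
    (h : Equiv.addLeft 1 ∈ N) (c : ZMod n) : Equiv.addLeft c ∈ N := by
  obtain ⟨k, rfl⟩ := ZMod.intCast_surjective c
  rw [← zsmul_one, ← Equiv.zsmul_addLeft]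
  exact zpow_mem h k

theorem ZMod.castHom_eq_of_nsmul_sub_eq_zero {t q k : ℕ} (hq : q ∣ t) (hk : k.Coprime q)
    {x y : ZMod t} (h : k • (y - x) = 0) :
    ZMod.castHom hq (ZMod q) y = ZMod.castHom hq (ZMod q) x := by
  have hunit : IsUnit (k : ZMod q) := (ZMod.isUnit_iff_coprime k q).mpr hk
  rw [← sub_eq_zero, ← map_sub, ← hunit.mul_right_eq_zero, ← nsmul_eq_mul, ← map_nsmul, h,
    map_zero]

theorem Subgroup.le_normalizer_map_subtype {G : Type*} [Group G] {N : Subgroup G}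
    (P : Subgroup N) [P.Normal] : N ≤ normalizer (P.map N.subtype : Set G) := by
  refine (normal_subgroupOf_iff_le_normalizer (map_subtype_le P)).mp ?_
  rwa [← comap_subtype, comap_map_eq_self_of_injective N.subtype_injective]

theorem sylow_of_nilpotent_fixes_coordinates_general
    (ℓ : ℕ) (p a : Fin ℓ → ℕ) (hp : ∀ i, (p i).Prime)
    (hinj : Function.Injective p)
    (t : ℕ) (ht : t = ∏ i, p i ^ a i)
    (hdvd : ∀ i, p i ^ a i ∣ t)
    (N : Subgroup (Equiv.Perm (ZMod t))) (hN : Group.IsNilpotent N)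
    (hg : (Equiv.addLeft (1 : ZMod t)) ∈ N)
    (j : Fin ℓ) (h : Equiv.Perm (ZMod t)) (hh : h ∈ N)
    (hph : ∃ k : ℕ, orderOf h = p j ^ k) :
    ∀ (x : ZMod t) (i : Fin ℓ), i ≠ j →
      ZMod.castHom (hdvd i) (ZMod (p i ^ a i)) (h x) =
        ZMod.castHom (hdvd i) (ZMod (p i ^ a i)) x := by
  intro x i hij
  have : NeZero t := ⟨ht ▸ Finset.prod_ne_zero_iff.mpr fun i _ ↦ pow_ne_zero _ (hp i).ne_zero⟩
  have : Fact (p j).Prime := ⟨hp j⟩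
  obtain ⟨k, hk⟩ := hph
  have hpgroup : IsPGroup (p j) (zpowers (⟨h, hh⟩ : N)) :=
    .of_card (n := k) (by rw [Nat.card_zpowers, ← hk, orderOf_mk])
  obtain ⟨P, hhP⟩ := hpgroup.exists_le_sylow
  set Q := (P : Subgroup N).map N.subtype
  obtain ⟨n, hn⟩ := IsPGroup.iff_card.mp (P.isPGroup'.map N.subtype)
  -- `P` is normal in `N` by the instance for Sylow subgroups of finite nilpotent groups
  have hQ : ∀ c, Equiv.addLeft c ∈ normalizer (Q : Set (Equiv.Perm (ZMod t))) := fun c ↦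
    le_normalizer_map_subtype (P : Subgroup N) (ZMod.addLeft_mem_of_addLeft_one_mem hg c)
  have hcop : (p j ^ n).Coprime (p i ^ a i) :=
    ((Nat.coprime_primes (hp j) (hp i)).mpr (hinj.ne hij.symm)).pow n (a i)
  refine ZMod.castHom_eq_of_nsmul_sub_eq_zero (hdvd i) hcop ?_
  rw [← hn, sub_eq_neg_add]
  exact Equiv.Perm.card_nsmul_neg_add_eq_zero hQ ⟨⟨h, hh⟩, hhP (mem_zpowers _), rfl⟩ x

theorem sylow_of_nilpotent_fixes_coordinates
    (ℓ : ℕ) (p a : Fin ℓ → ℕ) (hp : ∀ i, (p i).Prime)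
    (hinj : Function.Injective p) (ha : ∀ i, 0 < a i)
    (t : ℕ) (ht : t = ∏ i, p i ^ a i)
    (hdvd : ∀ i, p i ^ a i ∣ t)
    (N : Subgroup (Equiv.Perm (ZMod t))) (hN : Group.IsNilpotent N)
    (hg : (Equiv.addLeft (1 : ZMod t)) ∈ N)
    (j : Fin ℓ) (h : Equiv.Perm (ZMod t)) (hh : h ∈ N)
    (hph : ∃ k : ℕ, orderOf h = p j ^ k) :
    ∀ (x : ZMod t) (i : Fin ℓ), i ≠ j →
      ZMod.castHom (hdvd i) (ZMod (p i ^ a i)) (h x) =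
        ZMod.castHom (hdvd i) (ZMod (p i ^ a i)) x :=
  sylow_of_nilpotent_fixes_coordinates_general ℓ p a hp hinj t ht hdvd N hN hg j h hh hph
end

section
/- If g ∈ S_n has orbits O_1,...,O_k on {1,...,n} of pairwise distinct sizes t_1,...,t_k, then any nilpotent subgroup N of S_n containing g stabilizes each orbit O_i setwise; that is, N ≤ Sym(O_1) × Sym(O_2) × ⋯ × Sym(O_k). -/
/-!
Let `H ≤ N` be the elements of `N` mapping every `g`-cycle into itself; `g ∈ H`. If `h ∈ N`
normalizes `H`, then `h g h⁻¹ ∈ H`, so `h` maps each `g`-cycle injectively into a `g`-cycle,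
and the cycle size can only grow along `x ↦ h x`. Since `h` permutes the finite set of points,
the sum of these sizes is unchanged by `h`, so no size grows at all; as distinct cycles have
distinct sizes, `h` maps each cycle into itself, i.e. `h ∈ H`. Thus `H` is self-normalizing, and
a self-normalizing subgroup of a nilpotent group is the whole group.
-/

open Equiv

theorem Equiv.Perm.comp_eq_of_le_comp {α M : Type*} [Fintype α] [AddCommMonoid M]
    [PartialOrder M] [IsOrderedCancelAddMonoid M] (σ : Perm α) {f : α → M}
    (hf : f ≤ f ∘ σ) : f ∘ σ = f :=
  funext fun x => ((Finset.sum_eq_sum_iff_of_le fun x _ => hf x).mp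
    (σ.sum_comp Finset.univ f (by simp)).symm x (Finset.mem_univ x)).symm

namespace Equiv.Perm

variable {α : Type*} (g : Perm α)

def cycleStabilizer : Subgroup (Perm α) where
  carrier := {h | ∀ x, g.SameCycle x (h x)}
  one_mem' x := SameCycle.refl g x
  mul_mem' {a b} ha hb x := (hb x).trans (ha (b x))
  inv_mem' {a} ha x := by simpa using (ha (a⁻¹ x)).symm

variable {g}

theorem self_mem_cycleStabilizer : g ∈ cycleStabilizer g := fun x => ⟨1, by simp⟩

theorem SameCycle.of_mem_cycleStabilizer {k : Perm α} (hk : k ∈ cycleStabilizer g) {x y : α}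
    (hxy : k.SameCycle x y) : g.SameCycle x y := by
  obtain ⟨i, rfl⟩ := hxy
  exact zpow_mem hk i x

theorem SameCycle.apply_of_conj_mem_cycleStabilizer {h : Perm α}
    (hconj : h * g * h⁻¹ ∈ cycleStabilizer g) {x y : α} (hxy : g.SameCycle x y) :
    g.SameCycle (h x) (h y) :=
  SameCycle.of_mem_cycleStabilizer hconj (sameCycle_conj.mpr (by simpa using hxy))

theorem card_sameCycle_le_of_conj_mem_cycleStabilizer [Finite α] {h : Perm α}
    (hconj : h * g * h⁻¹ ∈ cycleStabilizer g) (x : α) :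
    Nat.card {z // g.SameCycle x z} ≤ Nat.card {z // g.SameCycle (h x) z} :=
  Nat.card_le_card_of_injective
    (Subtype.map h fun _ => SameCycle.apply_of_conj_mem_cycleStabilizer hconj)
    (Subtype.map_injective _ h.injective)

theorem mem_cycleStabilizer_of_conj_mem [Fintype α]
    (hdist : ∀ x y : α,
      Nat.card {z // g.SameCycle x z} = Nat.card {z // g.SameCycle y z} → g.SameCycle x y)
    {h : Perm α} (hconj : h * g * h⁻¹ ∈ cycleStabilizer g) : h ∈ cycleStabilizer g :=
  fun x => hdist x (h x)
    (congrFun (h.comp_eq_of_le_comp (card_sameCycle_le_of_conj_mem_cycleStabilizer hconj)) x).symm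

end Equiv.Perm

theorem Subgroup.eq_top_of_normalizer_le {G : Type*} [Group G] [Group.IsNilpotent G]
    {H : Subgroup G} (hH : normalizer (H : Set G) ≤ H) : H = ⊤ :=
  normalizerCondition_iff_only_full_group_self_normalizing.mp
    Group.normalizerCondition_of_isNilpotent H (le_antisymm hH le_normalizer)

theorem nilpotent_stabilizes_orbits_of_distinct_sizes {n : ℕ}
    (g : Equiv.Perm (Fin n))
    (hdist : ∀ x y : Fin n,
      Nat.card {z : Fin n // g.SameCycle x z} = Nat.card {z : Fin n // g.SameCycle y z} →
        g.SameCycle x y)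
    (N : Subgroup (Equiv.Perm (Fin n))) (hN : Group.IsNilpotent N) (hgN : g ∈ N) :
    ∀ h ∈ N, ∀ x : Fin n, g.SameCycle x (h x) := by
  set H := (Perm.cycleStabilizer g).subgroupOf N
  have hgH : (⟨g, hgN⟩ : N) ∈ H := Subgroup.mem_subgroupOf.mpr Perm.self_mem_cycleStabilizer
  have hH : Subgroup.normalizer (H : Set N) ≤ H := fun h hh =>
    Perm.mem_cycleStabilizer_of_conj_mem hdist <|
      Subgroup.mem_subgroupOf.mp ((Subgroup.mem_normalizer_iff.mp hh _).mp hgH)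
  have hHtop : H = ⊤ := Subgroup.eq_top_of_normalizer_le hH
  intro h hhN
  exact Subgroup.mem_subgroupOf.mp (hHtop ▸ Subgroup.mem_top (⟨h, hhN⟩ : N))
end

section
/- The permutation g = (2,3)(4,5,6) in S_6 lies in a transitive solvable subgroup of S_6 that does not stabilize the orbits of g; hence the conclusion of Lemma 2.1 (that any nilpotent subgroup containing an element with distinct orbit sizes stabilizes each orbit) fails if 'nilpotent' is weakened to 'solvable'. -/
/-!
`g` preserves the block system `{0, 1, 2} | {3, 4, 5}`, acting as a transposition on the first
block and as a 3-cycle on the second. Hence `g` lies in the imprimitive wreath product `S₃ ≀ C₂`,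
realised on `Fin 3 × C₂ ≃ Fin 6`. This group is solvable, being an extension of `S₃ × S₃` by `C₂`,
and it is transitive; its block swap moves the fixed point `0` of `g` out of the orbit `{0}`.
-/

open Equiv

theorem derivedSeries_pi {η : Type*} [Finite η] {G : η → Type*} [∀ i, Group (G i)]
    (n : ℕ) :
    derivedSeries (∀ i, G i) n = Subgroup.pi Set.univ fun i ↦ derivedSeries (G i) n := by
  induction n with
  | zero => simp only [derivedSeries_zero, Subgroup.pi_top]
  | succ n ih => simp only [derivedSeries_succ, ih, Subgroup.commutator_pi_pi_of_finite]

instance Pi.isSolvable {η : Type*} [Finite η] {G : η → Type*} [∀ i, Group (G i)]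
    [∀ i, Group.IsSolvable (G i)] : Group.IsSolvable (∀ i, G i) := by
  choose n hn using fun i ↦ (Group.isSolvable_def (G i)).mp inferInstance
  have := Fintype.ofFinite η
  refine (Group.isSolvable_def _).mpr ⟨Finset.univ.sup n, ?_⟩
  rw [derivedSeries_pi, ← Subgroup.pi_bot]
  congr! with i
  exact eq_bot_mono (derivedSeries_antitone _ (Finset.le_sup (Finset.mem_univ i))) (hn i)

theorem MonoidHom.isSolvable_range {G H : Type*} [Group G] [Group H] [Group.IsSolvable G]
    (f : G →* H) : Group.IsSolvable f.range :=
  Group.isSolvable_of_surjective f.rangeRestrict_surjective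

theorem Equiv.Perm.isSolvable_of_card_le_three {α : Type*} [Fintype α] [DecidableEq α]
    (hα : Nat.card α ≤ 3) : Group.IsSolvable (Perm α) := by
  have := alternatingGroup.isCyclic_of_card_le_three hα
  let := IsCyclic.commGroup (α := alternatingGroup α)
  exact Group.isSolvable_of_ker_le_range (alternatingGroup α).subtype Perm.sign
    (by rw [Subgroup.range_subtype, alternatingGroup_eq_sign_ker])

namespace RegularWreathProduct

variable {D Q : Type*} [Group D] [Group Q]

variable (D Q) in
def ofLeft : (Q → D) →* D ≀ᵣ Q where
  toFun f := ⟨f, 1⟩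
  map_one' := rfl
  map_mul' f g := by ext <;> simp [mul_def]

theorem ker_rightHom_le_range_ofLeft : (rightHom : D ≀ᵣ Q →* Q).ker ≤ (ofLeft D Q).range :=
  fun w hw ↦ ⟨w.left, by ext <;> simp_all [ofLeft, rightHom_eq_right]⟩

instance [Finite Q] [Group.IsSolvable D] [Group.IsSolvable Q] : Group.IsSolvable (D ≀ᵣ Q) :=
  Group.isSolvable_of_ker_le_range (ofLeft D Q) rightHom ker_rightHom_le_range_ofLeft

variable {Λ α : Type*} [MulAction D Λ]

instance [MulAction.IsPretransitive D Λ] : MulAction.IsPretransitive (D ≀ᵣ Q) (Λ × Q) where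
  exists_smul_eq := fun ⟨a, q⟩ ⟨b, r⟩ ↦ by
    obtain ⟨d, rfl⟩ := MulAction.exists_smul_eq D a b
    exact ⟨⟨fun _ ↦ d, r * q⁻¹⟩, by simp⟩

variable (D) in
def toPermCongr (e : Λ × Q ≃ α) : D ≀ᵣ Q →* Perm α :=
  e.permCongrHom.toMonoidHom.comp (MulAction.toPermHom _ _)

theorem toPermCongr_apply (e : Λ × Q ≃ α) (w : D ≀ᵣ Q) (p : Λ × Q) :
    toPermCongr D e w (e p) = e (w • p) := by
  simp [toPermCongr, Equiv.permCongr_apply]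

theorem exists_mem_range_toPermCongr_apply_eq [MulAction.IsPretransitive D Λ]
    (e : Λ × Q ≃ α) (x y : α) : ∃ h ∈ (toPermCongr D e).range, h x = y := by
  obtain ⟨w, hw⟩ := MulAction.exists_smul_eq (D ≀ᵣ Q) (e.symm x) (e.symm y)
  refine ⟨toPermCongr D e w, ⟨w, rfl⟩, ?_⟩
  rw [← e.apply_symm_apply x, toPermCongr_apply, hw, e.apply_symm_apply]

end RegularWreathProduct

open RegularWreathProduct

/-- `(a, ofAdd b) ↦ a + 3 b`, so the blocks `Fin 3 × {q}` are `{0, 1, 2}` and `{3, 4, 5}`. -/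
def blockEquiv : Fin 3 × Multiplicative (ZMod 2) ≃ Fin 6 :=
  (prodComm _ _).trans ((Multiplicative.toAdd.prodCongr (Equiv.refl _)).trans finProdFinEquiv)

theorem solvable_subgroup_not_stabilizing_orbits :
    ∃ H : Subgroup (Equiv.Perm (Fin 6)),
      IsSolvable H ∧
      (Equiv.swap (1 : Fin 6) 2 * (Equiv.swap (3 : Fin 6) 4 * Equiv.swap (4 : Fin 6) 5)) ∈ H ∧
      (∀ x y : Fin 6, ∃ h ∈ H, h x = y) ∧
      ∃ h ∈ H, ∃ x : Fin 6,
        ¬ (Equiv.swap (1 : Fin 6) 2 * (Equiv.swap (3 : Fin 6) 4 * Equiv.swap (4 : Fin 6) 5)).SameCycle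
            x (h x) := by
  have : Group.IsSolvable (Perm (Fin 3)) := Perm.isSolvable_of_card_le_three (by simp)
  let φ := toPermCongr (Perm (Fin 3)) blockEquiv
  have hg : φ ⟨fun q ↦ if q = 1 then swap 1 2 else finRotate 3, 1⟩ =
      swap 1 2 * (swap 3 4 * swap 4 5) := by decide
  refine ⟨φ.range, φ.isSolvable_range, ⟨_, hg⟩, exists_mem_range_toPermCongr_apply_eq blockEquiv,
    φ (inl (.ofAdd 1)), ⟨_, rfl⟩, 0, fun hcycle ↦ ?_⟩
  exact absurd (hcycle.eq_of_left (by decide)) (by decide)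
end

section
/- Let p be a prime and n = a_0 + a_1 p + ⋯ + a_k p^k the base-p expansion of n. Then a Sylow p-subgroup of S_n has exactly a_i orbits of size p^i on {1,...,n} for each i = 0,...,k, and no other orbits. -/
/-!
Since `P` is a `p`-group, its orbits have `p`-power sizes `p ^ eᵢ` summing to `n`. Restricting to
the orbits embeds `P` into `∏ Sym(orbit)`, so `p ^ vₚ(n!) = |P|` divides `∏ (p ^ eᵢ)!`. By Legendre,
`(p - 1) vₚ(m!) = m - sₚ(m)` with `sₚ` the base-`p` digit sum, and `sₚ(p ^ e) = 1`; hence the number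
of orbits is at most `sₚ(n)`. On the other hand, `sₚ` is subadditive, so any way of writing `n` as a
sum of `r` powers of `p` has `r ≥ sₚ(n)`, with strict inequality as soon as some power occurs `p`
times (merge those `p` copies into one). So every power occurs fewer than `p` times, and by
uniqueness of base-`p` expansions the multiplicities are the digits of `n`.
-/

open Nat MulAction

namespace Nat

theorem getD_digits_ofDigits {b : ℕ} (hb : 1 < b) {L : List ℕ} (hL : ∀ x ∈ L, x < b) (i : ℕ) :
    (b.digits (ofDigits b L)).getD i 0 = L.getD i 0 := by
  conv_rhs => rw [← (setInvOn_digitsAppend_ofDigits hb L.length).1 ⟨rfl, hL⟩]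
  rcases lt_or_ge i (b.digits (ofDigits b L)).length with h | h
  · rw [digitsAppend, List.getD_append _ _ _ _ h]
  · rw [digitsAppend, List.getD_append_right _ _ _ _ h, List.getD_eq_default _ _ h]
    simp [List.getD_eq_getElem?_getD]

theorem ofDigits_map_range (b : ℕ) (f : ℕ → ℕ) (B : ℕ) :
    ofDigits b ((List.range B).map f) = ∑ i ∈ Finset.range B, f i * b ^ i := by
  induction B with
  | zero => simp
  | succ B ih =>
    rw [List.range_succ, List.map_append, ofDigits_append, ih, Finset.sum_range_succ]
    simp [ofDigits_singleton, mul_comm]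

theorem ofDigits_map_range_count {E : Multiset ℕ} {B : ℕ} (hB : ∀ e ∈ E, e < B) (b : ℕ) :
    ofDigits b ((List.range B).map E.count) = (E.map (b ^ ·)).sum := by
  rw [ofDigits_map_range, Finset.sum_multiset_map_count]
  refine (Finset.sum_subset (fun e he ↦ ?_) fun e _ he ↦ ?_).symm
  · exact Finset.mem_range.2 (hB e (Multiset.mem_toFinset.1 he))
  · simp [Multiset.count_eq_zero.2 (mt Multiset.mem_toFinset.2 he)]

theorem getD_digits_multiset_sum_pow {b : ℕ} (hb : 1 < b) {E : Multiset ℕ}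
    (hE : ∀ j, E.count j < b) (j : ℕ) :
    (b.digits (E.map (b ^ ·)).sum).getD j 0 = E.count j := by
  have hB : ∀ e ∈ E, e < E.sum + j + 1 := fun e he ↦
    Nat.lt_succ_of_le ((Multiset.le_sum_of_mem he).trans (Nat.le_add_right _ _))
  rw [← ofDigits_map_range_count hB, getD_digits_ofDigits hb (by simp [hE]),
    List.getD_eq_getElem _ _ (by simp)]
  simp

variable {p : ℕ} [hp : Fact p.Prime]

theorem sub_one_mul_factorization_factorial_add_digits_sum (m : ℕ) :
    (p - 1) * (m !).factorization p + (p.digits m).sum = m := by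
  rw [factorization_def _ hp.out, sub_one_mul_padicValNat_factorial]
  exact Nat.sub_add_cancel (digit_sum_le p m)

theorem digits_sum_add_le (a b : ℕ) :
    (p.digits (a + b)).sum ≤ (p.digits a).sum + (p.digits b).sum := by
  have hdvd := (factorization_le_iff_dvd (by positivity) (by positivity)).2
    (factorial_mul_factorial_dvd_factorial_add a b) p
  rw [factorization_mul (factorial_ne_zero a) (factorial_ne_zero b), Finsupp.add_apply] at hdvd
  have hmul := Nat.mul_le_mul_left (p - 1) hdvd
  have ha := sub_one_mul_factorization_factorial_add_digits_sum (p := p) a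
  have hb := sub_one_mul_factorization_factorial_add_digits_sum (p := p) b
  have hab := sub_one_mul_factorization_factorial_add_digits_sum (p := p) (a + b)
  rw [Nat.mul_add] at hmul
  omega

theorem digits_sum_base_pow (k : ℕ) : (p.digits (p ^ k)).sum = 1 := by
  have := congrArg List.sum (digits_base_pow_mul (k := k) hp.out.one_lt one_pos)
  simpa [digits_of_lt p 1 one_ne_zero hp.out.one_lt] using this

theorem digits_sum_multiset_sum_pow_le_card (E : Multiset ℕ) :
    (p.digits (E.map (p ^ ·)).sum).sum ≤ Multiset.card E := by
  induction E using Multiset.induction_on with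
  | empty => simp
  | cons e E ih =>
    rw [Multiset.map_cons, Multiset.sum_cons, Multiset.card_cons]
    have := digits_sum_add_le (p := p) (p ^ e) (E.map (p ^ ·)).sum
    rw [digits_sum_base_pow] at this
    omega

theorem count_lt_of_card_le_digits_sum {E : Multiset ℕ}
    (h : Multiset.card E ≤ (p.digits (E.map (p ^ ·)).sum).sum) (j : ℕ) : E.count j < p := by
  by_contra! hj
  obtain ⟨D, rfl⟩ := Multiset.le_iff_exists_add.1 (Multiset.le_count_iff_replicate_le.1 hj)
  have hmerged := digits_sum_multiset_sum_pow_le_card (p := p) ((j + 1) ::ₘ D)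
  have hp2 := hp.out.two_le
  simp only [Multiset.map_cons, Multiset.sum_cons, Multiset.card_cons, Multiset.map_add,
    Multiset.sum_add, Multiset.map_replicate, Multiset.sum_replicate, Multiset.card_add,
    Multiset.card_replicate, smul_eq_mul, pow_succ, mul_comm] at h hmerged
  omega

end Nat

namespace MulAction

variable {G α : Type*} [Group G] [MulAction G α] [Finite α]

theorem sum_card_orbit [Fintype (orbitRel.Quotient G α)] :
    ∑ ω : orbitRel.Quotient G α, Nat.card ω.orbit = Nat.card α := by
  rw [Nat.card_congr (selfEquivSigmaOrbits' G α), Nat.card_sigma]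

theorem card_dvd_prod_factorial_card_orbit [FaithfulSMul G α]
    [Fintype (orbitRel.Quotient G α)] :
    Nat.card G ∣ ∏ ω : orbitRel.Quotient G α, (Nat.card ω.orbit)! := by
  let restrict : G →* ∀ ω : orbitRel.Quotient G α, Equiv.Perm ω.orbit :=
    MonoidHom.pi fun ω ↦ toPermHom G ω.orbit
  have hrestrict : Function.Injective restrict := by
    refine (injective_iff_map_eq_one restrict).2 fun g hg ↦
      eq_of_smul_eq_smul (α := α) fun x ↦ ?_
    let ω : orbitRel.Quotient G α := ⟦x⟧
    have hx : x ∈ ω.orbit := orbitRel.Quotient.mem_orbit.2 rfl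
    simpa [restrict] using congrArg (fun σ ↦ (σ ⟨x, hx⟩ : α)) (congrFun hg ω)
  simpa [Nat.card_pi, Nat.card_perm] using Subgroup.card_dvd_of_injective restrict hrestrict

end MulAction

theorem Sylow.sum_digits_sum_card_orbit_le {α : Type*} [Fintype α] {p : ℕ} [hp : Fact p.Prime]
    (P : Sylow p (Equiv.Perm α)) [Fintype (orbitRel.Quotient P α)] :
    ∑ ω : orbitRel.Quotient P α, (p.digits (Nat.card ω.orbit)).sum ≤
      (p.digits (Fintype.card α)).sum := by
  have hdvd := card_dvd_prod_factorial_card_orbit (G := P) (α := α)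
  rw [P.card_eq_multiplicity, Nat.card_perm, Nat.card_eq_fintype_card,
    hp.out.pow_dvd_iff_le_factorization (Finset.prod_ne_zero_iff.2 fun _ _ ↦ factorial_ne_zero _),
    factorization_prod fun _ _ ↦ factorial_ne_zero _, Finsupp.finsetSum_apply] at hdvd
  have horbits : (p - 1) * ∑ ω : orbitRel.Quotient P α, ((Nat.card ω.orbit)!).factorization p +
      ∑ ω : orbitRel.Quotient P α, (p.digits (Nat.card ω.orbit)).sum = Fintype.card α := by
    simp only [Finset.mul_sum, ← Finset.sum_add_distrib,
      sub_one_mul_factorization_factorial_add_digits_sum, sum_card_orbit, Nat.card_eq_fintype_card]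
  have htotal := sub_one_mul_factorization_factorial_add_digits_sum (p := p) (Fintype.card α)
  have hmul := Nat.mul_le_mul_left (p - 1) hdvd
  omega

theorem sylow_orbit_sizes_base_p_general {n p : ℕ} (hp : p.Prime)
    (P : Sylow p (Equiv.Perm (Fin n))) :
    (∀ ω : MulAction.orbitRel.Quotient (P : Subgroup (Equiv.Perm (Fin n))) (Fin n),
        ∃ i : ℕ, Nat.card ω.orbit = p ^ i) ∧
    ∀ i : ℕ,
      Nat.card {ω : MulAction.orbitRel.Quotient (P : Subgroup (Equiv.Perm (Fin n))) (Fin n) //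
          Nat.card ω.orbit = p ^ i} = (Nat.digits p n).getD i 0 := by
  have := Fact.mk hp
  let Ω := orbitRel.Quotient P (Fin n)
  let := Fintype.ofFinite Ω
  have hpow (ω : Ω) : ∃ i, Nat.card ω.orbit = p ^ i := by
    rw [ω.orbit_eq_orbit_out Quotient.out_eq']
    exact P.isPGroup'.card_orbit _
  choose e he using hpow
  let E : Multiset ℕ := Finset.univ.val.map e
  have hsum : (E.map (p ^ ·)).sum = n := by
    simpa [E, he] using sum_card_orbit (G := P) (α := Fin n)
  have hcard : Multiset.card E ≤ (p.digits n).sum := by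
    simpa [E, he, digits_sum_base_pow] using P.sum_digits_sum_card_orbit_le
  have hcount : ∀ j, E.count j < p := count_lt_of_card_le_digits_sum (by rwa [hsum])
  have hdigits : ∀ j, (p.digits n).getD j 0 = E.count j :=
    hsum ▸ getD_digits_multiset_sum_pow hp.one_lt hcount
  refine ⟨fun ω ↦ ⟨e ω, he ω⟩, fun i ↦ ?_⟩
  rw [hdigits, Multiset.count_map, Nat.card_eq_fintype_card, Fintype.card_subtype]
  simp_rw [he, Nat.pow_right_inj hp.two_le, eq_comm]
  rfl

theorem sylow_orbit_sizes_base_p {n p : ℕ} (hn : 1 ≤ n) (hp : p.Prime)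
    (P : Sylow p (Equiv.Perm (Fin n))) :
    (∀ ω : MulAction.orbitRel.Quotient (P : Subgroup (Equiv.Perm (Fin n))) (Fin n),
        ∃ i : ℕ, Nat.card ω.orbit = p ^ i) ∧
    ∀ i : ℕ,
      Nat.card {ω : MulAction.orbitRel.Quotient (P : Subgroup (Equiv.Perm (Fin n))) (Fin n) //
          Nat.card ω.orbit = p ^ i} = (Nat.digits p n).getD i 0 :=
  sylow_orbit_sizes_base_p_general hp P
end

section
/- If P is a Sylow p-subgroup of S_{p^d} (p prime, d ≥ 1), then P is a transitive subgroup of S_{p^d}. -/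
open Pointwise

theorem sylow_p_transitive_on_p_power (p d : ℕ) (hp : p.Prime) (hd : 1 ≤ d)
    (P : Sylow p (Equiv.Perm (Fin (p ^ d)))) :
    ∀ x y : Fin (p ^ d), ∃ h ∈ P, h x = y := by
  haveI : Fact p.Prime := ⟨hp⟩
  haveI : NeZero (p ^ d) := ⟨pow_ne_zero d hp.ne_zero⟩
  have hn : p ^ d = p ^ d := rfl
  -- the translation subgroup
  let φ : Multiplicative (Fin (p ^ d)) →* Equiv.Perm (Fin (p ^ d)) :=
    { toFun := fun a => Equiv.addLeft a.toAdd
      map_one' := by ext x; simp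
      map_mul' := by intro a b; ext x; simp [add_assoc] }
  have hpg : IsPGroup p φ.range := by
    rintro ⟨g, a, rfl⟩
    refine ⟨d, ?_⟩
    have ha : a ^ (p ^ d) = 1 := by
      have : a ^ Fintype.card (Multiplicative (Fin (p ^ d))) = 1 := pow_card_eq_one
      simpa using this
    ext1
    simp [← map_pow, ha]
  obtain ⟨Q, hQ⟩ := hpg.exists_le_sylow
  obtain ⟨g, hg⟩ := MulAction.exists_smul_eq (Equiv.Perm (Fin (p ^ d))) Q P
  intro x y
  refine ⟨g * φ (Multiplicative.ofAdd (g⁻¹ y - g⁻¹ x)) * g⁻¹, ?_, ?_⟩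
  · rw [← hg]
    have hm : φ (Multiplicative.ofAdd (g⁻¹ y - g⁻¹ x)) ∈ (Q : Subgroup _) :=
      hQ ⟨_, rfl⟩
    have := Subgroup.smul_mem_pointwise_smul _ (MulAut.conj g) _ hm
    exact this
  · simp [φ, sub_add_cancel]
end

section
/- Let q = p^a be a prime power. Then the normalizer in S_q of a Sylow p-subgroup of S_q has order (p-1)^a · p^e, where e = (p^a - 1)/(p - 1). -/
/-!
The iterated wreath product `W_a = C_p ≀ ⋯ ≀ C_p` acting on `(ℤ/p)^a` has order
`p ^ (1 + p + ⋯ + p^(a-1))`, which by Legendre's formula is the `p`-part of `(p^a)!`; so it is a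
Sylow subgroup of `S_{p^a}`, and all Sylow normalizers have the same order.

If `H` is transitive on `Y`, the normalizer of `C_n ≀ H` in `Sym (ℤ/n × Y)` consists of the maps
`(t, y) ↦ (d t + g y, τ y)` with `d` a unit and `τ ∈ N(H)`: the translation `t ↦ t + 1` is central in
`C_n ≀ H` and the central elements are translations, so a normalizing `σ` satisfies
`σ (t + 1, y) = σ (t, y) + (c, 0)` for some `c`, which makes `σ` affine in `t`.
Hence `|N(W_{a+1})| = (p - 1) p^(p^a) |N(W_a)|`.
-/

open Equiv Subgroup MulAction

theorem Subgroup.commute_conj_of_mem_normalizer {G : Type*} [Group G] {K : Subgroup G} {σ z : G}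
    (hσ : σ ∈ normalizer (K : Set G)) (hz : ∀ v ∈ K, Commute z v) :
    ∀ v ∈ K, Commute (σ * z * σ⁻¹) v := by
  intro v hv
  have hv' : σ⁻¹ * v * σ ∈ K := by
    simpa using (mem_normalizer_iff.mp (inv_mem hσ) v).mp hv
  simpa [mul_assoc] using (Commute.conj_iff σ).mpr (hz _ hv')

theorem Sylow.card_normalizer_eq {G : Type*} [Group G] [Finite G] {p : ℕ} [Fact p.Prime]
    (P Q : Sylow p G) :
    Nat.card (normalizer ((P : Subgroup G) : Set G)) =
      Nat.card (normalizer ((Q : Subgroup G) : Set G)) := by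
  have hP : Nat.card (normalizer ((P : Subgroup G) : Set G)) * Nat.card (Sylow p G) =
      Nat.card G := by
    rw [P.card_eq_index_normalizer]
    exact card_mul_index _
  have hQ : Nat.card (normalizer ((Q : Subgroup G) : Set G)) * Nat.card (Sylow p G) =
      Nat.card G := by
    rw [Q.card_eq_index_normalizer]
    exact card_mul_index _
  exact Nat.eq_of_mul_eq_mul_right Nat.card_pos (hP.trans hQ.symm)

theorem Nat.factorization_factorial_prime_pow {p : ℕ} (hp : p.Prime) (a : ℕ) :
    (p ^ a).factorial.factorization p = ∑ i ∈ Finset.range a, p ^ i := by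
  rw [Nat.factorization_def _ hp, padicValNat_def' hp.ne_one (Nat.factorial_ne_zero _),
    hp.multiplicity_factorial_pow]

namespace AffineWreath

section Ring

variable {R Y : Type*} [Ring R]

def affinePerm (d : Rˣ) (g : Y → R) (w : Perm Y) : Perm (R × Y) where
  toFun x := (d * x.1 + g x.2, w x.2)
  invFun x := (↑d⁻¹ * (x.1 - g (w⁻¹ x.2)), w⁻¹ x.2)
  left_inv x := by simp [← mul_assoc]
  right_inv x := by simp [mul_sub, ← mul_assoc]

@[simp]
theorem affinePerm_apply (d : Rˣ) (g : Y → R) (w : Perm Y) (x : R × Y) :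
    affinePerm d g w x = (d * x.1 + g x.2, w x.2) :=
  rfl

theorem affinePerm_mul (d d' : Rˣ) (g g' : Y → R) (w w' : Perm Y) :
    affinePerm d g w * affinePerm d' g' w' =
      affinePerm (d * d') (fun y => d * g' y + g (w' y)) (w * w') :=
  Equiv.ext fun x => by simp [mul_add, mul_assoc, add_assoc]

theorem affinePerm_one : affinePerm (1 : Rˣ) (0 : Y → R) 1 = 1 :=
  Equiv.ext fun x => by simp

theorem affinePerm_inv (d : Rˣ) (g : Y → R) (w : Perm Y) :
    (affinePerm d g w)⁻¹ = affinePerm d⁻¹ (fun y => -(↑d⁻¹ * g (w⁻¹ y))) w⁻¹ :=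
  Equiv.ext fun x => by simp [Perm.inv_def, affinePerm, mul_add, sub_eq_add_neg]

theorem affinePerm_inj [Nonempty Y] {d d' : Rˣ} {g g' : Y → R} {w w' : Perm Y} :
    affinePerm d g w = affinePerm d' g' w' ↔ d = d' ∧ g = g' ∧ w = w' := by
  refine ⟨fun h => ?_, by rintro ⟨rfl, rfl, rfl⟩; rfl⟩
  have at_zero (y : Y) : g y = g' y ∧ w y = w' y := by simpa using congr($h (0, y))
  have hg : g = g' := funext fun y => (at_zero y).1
  obtain ⟨y₀⟩ := ‹Nonempty Y›
  have hd : (d : R) = d' := by simpa [hg] using congr(($h (1, y₀)).1)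
  exact ⟨Units.ext hd, hg, Equiv.ext fun y => (at_zero y).2⟩

def shift (c : R) : Perm (R × Y) :=
  affinePerm 1 (fun _ => c) 1

theorem affinePerm_conj_affinePerm_one (d : Rˣ) (g h : Y → R) (τ w : Perm Y) :
    ∃ G, affinePerm d g τ * affinePerm 1 h w * (affinePerm d g τ)⁻¹ =
      affinePerm 1 G (τ * w * τ⁻¹) := by
  rw [affinePerm_inv, affinePerm_mul, affinePerm_mul]
  exact ⟨_, by rw [mul_one, mul_inv_cancel]⟩

/-- `affineWreath ⊥ H` is the wreath product `R ≀ H` (of the additive group of `R` by `H`) in its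
imprimitive action on `R × Y`; `affineWreath ⊤ H` adds the scalings by `Rˣ`. -/
def affineWreath (U : Subgroup Rˣ) (H : Subgroup (Perm Y)) : Subgroup (Perm (R × Y)) where
  carrier := {σ | ∃ d ∈ U, ∃ g, ∃ w ∈ H, affinePerm d g w = σ}
  one_mem' := ⟨1, U.one_mem, 0, 1, H.one_mem, affinePerm_one⟩
  mul_mem' := by
    rintro _ _ ⟨d, hd, g, w, hw, rfl⟩ ⟨d', hd', g', w', hw', rfl⟩
    exact ⟨_, U.mul_mem hd hd', _, _, H.mul_mem hw hw', (affinePerm_mul ..).symm⟩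
  inv_mem' := by
    rintro _ ⟨d, hd, g, w, hw, rfl⟩
    exact ⟨_, U.inv_mem hd, _, _, H.inv_mem hw, (affinePerm_inv ..).symm⟩

variable {U : Subgroup Rˣ} {H : Subgroup (Perm Y)}

theorem affinePerm_mem_affineWreath {d : Rˣ} {w : Perm Y} (g : Y → R) (hd : d ∈ U)
    (hw : w ∈ H) : affinePerm d g w ∈ affineWreath U H :=
  ⟨d, hd, g, w, hw, rfl⟩

theorem affinePerm_mem_affineWreath_iff [Nonempty Y] {d : Rˣ} {g : Y → R} {w : Perm Y} :
    affinePerm d g w ∈ affineWreath U H ↔ d ∈ U ∧ w ∈ H := by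
  refine ⟨?_, fun ⟨hd, hw⟩ => affinePerm_mem_affineWreath g hd hw⟩
  rintro ⟨d', hd', g', w', hw', h⟩
  obtain ⟨rfl, -, rfl⟩ := affinePerm_inj.mp h
  exact ⟨hd', hw'⟩

theorem card_affineWreath [Finite R] [Finite Y] [Nonempty Y] :
    Nat.card (affineWreath U H) = Nat.card U * (Nat.card R ^ Nat.card Y * Nat.card H) := by
  let f (x : U × (Y → R) × H) : affineWreath U H :=
    ⟨affinePerm x.1 x.2.1 x.2.2, affinePerm_mem_affineWreath _ x.1.2 x.2.2.2⟩
  have hf : Function.Bijective f := by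
    refine ⟨fun x x' h => ?_, ?_⟩
    · obtain ⟨hd, hg, hw⟩ := affinePerm_inj.mp congr(($h).1)
      exact Prod.ext (Subtype.ext hd) (Prod.ext hg (Subtype.ext hw))
    · rintro ⟨_, d, hd, g, w, hw, rfl⟩
      exact ⟨(⟨d, hd⟩, g, ⟨w, hw⟩), rfl⟩
  rw [← Nat.card_congr (Equiv.ofBijective f hf), Nat.card_prod, Nat.card_prod, Nat.card_fun]

theorem isPretransitive_affineWreath_bot (hH : IsPretransitive H Y) :
    IsPretransitive (affineWreath (⊥ : Subgroup Rˣ) H) (R × Y) := by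
  refine ⟨fun ⟨t, y⟩ ⟨t', y'⟩ => ?_⟩
  obtain ⟨w, hw⟩ := hH.exists_smul_eq y y'
  have hw' : (w : Perm Y) y = y' := hw
  exact ⟨⟨_, affinePerm_mem_affineWreath (fun _ => t' - t) (one_mem _) w.2⟩, by simpa using hw'⟩

theorem commute_shift {v : Perm (R × Y)} (hv : v ∈ affineWreath ⊥ H) (c : R) :
    Commute (shift c) v := by
  obtain ⟨d, hd, g, w, -, rfl⟩ := hv
  rw [mem_bot] at hd
  subst hd
  simp only [shift, Commute, SemiconjBy, affinePerm_mul, one_mul, mul_one, Units.val_one]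
  congr 1
  funext y
  exact add_comm _ _

theorem exists_eq_shift_of_forall_commute [Nontrivial R] [Nonempty Y] (hH : IsPretransitive H Y)
    {u : Perm (R × Y)} (hu : u ∈ affineWreath ⊥ H)
    (hcomm : ∀ v ∈ affineWreath ⊥ H, Commute u v) : ∃ c : R, u = shift c := by
  classical
  obtain ⟨d, hd, g, w, -, rfl⟩ := hu
  rw [mem_bot] at hd
  subst hd
  have comm_at_zero (h : Y → R) (v : Perm Y) (hv : v ∈ H) (y : Y) :
      h y + g (v y) = g y + h (w y) := by
    simpa using congr(($((hcomm _ (affinePerm_mem_affineWreath h (one_mem _) hv)).eq) (0, y)).1)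
  have hw : w = 1 := by
    refine Equiv.ext fun y => by_contra fun hy => ?_
    have hy' : y ≠ w y := fun h => hy h.symm
    have := comm_at_zero (Pi.single (w y) 1) 1 (one_mem _) y
    simp [hy'] at this
  subst hw
  obtain ⟨y₀⟩ := ‹Nonempty Y›
  refine ⟨g y₀, Equiv.ext fun x => ?_⟩
  obtain ⟨v, hv⟩ := hH.exists_smul_eq y₀ x.2
  have := comm_at_zero 0 v v.2 y₀
  simp_all [shift, Subgroup.smul_def]

end Ring

section ZMod

variable {n : ℕ} {Y : Type*}

theorem exists_eq_affinePerm_of_mul_shift [NeZero n] [Finite Y] [Nonempty Y]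
    {σ : Perm (ZMod n × Y)} {c : ZMod n} (h : σ * shift 1 = shift c * σ) :
    ∃ d g τ, σ = affinePerm d g τ := by
  set C : Y → ZMod n := fun y => (σ (0, y)).1
  set τ₀ : Y → Y := fun y => (σ (0, y)).2
  have hσ : ∀ t y, σ (t, y) = (C y + t * c, τ₀ y) := by
    have hσ_succ (t : ZMod n) (y : Y) : σ (t + 1, y) = ((σ (t, y)).1 + c, (σ (t, y)).2) := by
      simpa [shift] using congr($h (t, y))
    intro t y
    obtain ⟨k, rfl⟩ := ZMod.natCast_zmod_surjective t
    induction k with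
    | zero => simp [C, τ₀]
    | succ k ih => simp [hσ_succ, ih, add_mul, add_assoc]
  obtain ⟨y₀⟩ := ‹Nonempty Y›
  obtain ⟨s, hs⟩ : ∃ s, s * c = 1 := by
    refine (Finite.injective_iff_surjective.mp fun t t' htt' => ?_) 1
    simpa using σ.injective (a₁ := (t, y₀)) (a₂ := (t', y₀)) (by simp [hσ, htt'])
  have hτ₀ : Function.Injective τ₀ := fun y y' hyy' => by
    have : σ (s * (C y - C y'), y') = σ (0, y) := by
      rw [hσ, hσ, mul_assoc, mul_comm _ c, ← mul_assoc, hs]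
      simp [hyy']
    simpa using (congr_arg Prod.snd (σ.injective this)).symm
  refine ⟨(IsUnit.of_mul_eq_one_right s hs).unit, C,
    Equiv.ofBijective τ₀ (Finite.injective_iff_bijective.mp hτ₀), Equiv.ext fun ⟨t, y⟩ => ?_⟩
  simp [hσ, mul_comm t, add_comm]

theorem normalizer_affineWreath_bot [Fact (1 < n)] [Finite Y] [Nonempty Y]
    {H : Subgroup (Perm Y)} (hH : IsPretransitive H Y) :
    normalizer ((affineWreath (⊥ : Subgroup (ZMod n)ˣ) H : Subgroup (Perm (ZMod n × Y))) :
      Set (Perm (ZMod n × Y))) = affineWreath ⊤ (normalizer (H : Set (Perm Y))) := by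
  ext σ
  constructor
  · intro hσ
    have hz : shift 1 ∈ affineWreath (⊥ : Subgroup (ZMod n)ˣ) H :=
      affinePerm_mem_affineWreath _ (one_mem _) (one_mem _)
    obtain ⟨c, hc⟩ := exists_eq_shift_of_forall_commute hH ((mem_normalizer_iff.mp hσ _).mp hz)
      (Subgroup.commute_conj_of_mem_normalizer hσ fun v hv => commute_shift hv 1)
    obtain ⟨d, g, τ, rfl⟩ := exists_eq_affinePerm_of_mul_shift (σ := σ) (by rw [← hc]; group)
    refine affinePerm_mem_affineWreath g (mem_top d) (mem_normalizer_fintype fun w hw => ?_)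
    obtain ⟨G, hG⟩ := affinePerm_conj_affinePerm_one d g 0 τ w
    have := (mem_normalizer_iff.mp hσ _).mp (affinePerm_mem_affineWreath 0 (one_mem _) hw)
    rw [hG, affinePerm_mem_affineWreath_iff] at this
    exact this.2
  · rintro ⟨d, -, g, τ, hτ, rfl⟩
    refine mem_normalizer_fintype ?_
    rintro _ ⟨e, he, h, w, hw, rfl⟩
    rw [mem_bot] at he
    subst he
    obtain ⟨G, hG⟩ := affinePerm_conj_affinePerm_one d g h τ w
    rw [hG]
    exact affinePerm_mem_affineWreath G (one_mem _) ((mem_normalizer_iff.mp hτ w).mp hw)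

end ZMod

def Cube (n : ℕ) : ℕ → Type
  | 0 => PUnit
  | a + 1 => ZMod n × Cube n a

instance Cube.finite (n : ℕ) [NeZero n] : ∀ a, Finite (Cube n a)
  | 0 => inferInstanceAs (Finite PUnit)
  | a + 1 => have := Cube.finite n a; inferInstanceAs (Finite (ZMod n × Cube n a))

instance Cube.nonempty (n : ℕ) : ∀ a, Nonempty (Cube n a)
  | 0 => inferInstanceAs (Nonempty PUnit)
  | a + 1 => have := Cube.nonempty n a; inferInstanceAs (Nonempty (ZMod n × Cube n a))

theorem Cube.card (n : ℕ) : ∀ a, Nat.card (Cube n a) = n ^ a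
  | 0 => Nat.card_unique (α := PUnit)
  | a + 1 => by
    change Nat.card (ZMod n × Cube n a) = _
    rw [Nat.card_prod, Nat.card_zmod, Cube.card n a, pow_succ']

def iteratedWreath (n : ℕ) : (a : ℕ) → Subgroup (Perm (Cube n a))
  | 0 => ⊥
  | a + 1 => affineWreath ⊥ (iteratedWreath n a)

theorem isPretransitive_iteratedWreath (n : ℕ) :
    ∀ a, IsPretransitive (iteratedWreath n a) (Cube n a)
  | 0 => ⟨fun _ _ => ⟨1, Subsingleton.elim (α := PUnit) _ _⟩⟩
  | a + 1 => isPretransitive_affineWreath_bot (isPretransitive_iteratedWreath n a)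

theorem card_iteratedWreath (n : ℕ) [NeZero n] :
    ∀ a, Nat.card (iteratedWreath n a) = n ^ ∑ i ∈ Finset.range a, n ^ i
  | 0 => by simp [iteratedWreath]
  | a + 1 => by
    change Nat.card (affineWreath (⊥ : Subgroup (ZMod n)ˣ) (iteratedWreath n a)) = _
    rw [card_affineWreath, card_iteratedWreath n a, Finset.sum_range_succ,
      Nat.card_zmod, Cube.card, card_bot, pow_add]
    ring

theorem card_normalizer_iteratedWreath (n : ℕ) [Fact (1 < n)] :
    ∀ a, Nat.card (normalizer (iteratedWreath n a : Set (Perm (Cube n a)))) =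
      n.totient ^ a * n ^ ∑ i ∈ Finset.range a, n ^ i
  | 0 => by
    change Nat.card (normalizer ((⊥ : Subgroup (Perm PUnit)) : Set (Perm PUnit))) = _
    simp
  | a + 1 => by
    change Nat.card (normalizer ((affineWreath (⊥ : Subgroup (ZMod n)ˣ) (iteratedWreath n a) :
      Subgroup (Perm (ZMod n × Cube n a))) : Set (Perm (ZMod n × Cube n a)))) = _
    rw [normalizer_affineWreath_bot (isPretransitive_iteratedWreath n a), card_affineWreath,
      card_normalizer_iteratedWreath n a, Finset.sum_range_succ, Nat.card_zmod, Cube.card,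
      card_top, Nat.card_eq_fintype_card, ZMod.card_units_eq_totient, pow_add]
    ring

end AffineWreath

open AffineWreath in
theorem card_normalizer_sylow_symmetric_general (p a : ℕ) (hp : p.Prime)
    (q : ℕ) (hq : q = p ^ a) (P : Sylow p (Equiv.Perm (Fin q))) :
    Nat.card (Subgroup.normalizer ((P : Subgroup (Equiv.Perm (Fin q))) : Set (Equiv.Perm (Fin q)))) =
      (p - 1) ^ a * p ^ ((p ^ a - 1) / (p - 1)) := by
  have := Fact.mk hp
  subst hq
  let ψ : Perm (Cube p a) ≃* Perm (Fin (p ^ a)) :=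
    ((Finite.equivFin _).trans (finCongr (Cube.card p a))).permCongrHom
  have hψ : Function.Injective ψ.toMonoidHom := ψ.injective
  obtain ⟨Q, hQ⟩ : ∃ Q : Sylow p (Perm (Fin (p ^ a))),
      (Q : Subgroup (Perm (Fin (p ^ a)))) = (iteratedWreath p a).map ψ.toMonoidHom :=
    ⟨Sylow.ofCard _ <| by
      rw [card_map_of_injective hψ, card_iteratedWreath, Nat.card_perm, Nat.card_fin,
        Nat.factorization_factorial_prime_pow hp], Sylow.coe_ofCard ..⟩
  calc Nat.card (normalizer ((P : Subgroup (Perm (Fin (p ^ a)))) : Set (Perm (Fin (p ^ a)))))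
      = Nat.card (normalizer ((Q : Subgroup (Perm (Fin (p ^ a)))) : Set (Perm (Fin (p ^ a))))) :=
        P.card_normalizer_eq Q
    _ = Nat.card (normalizer (iteratedWreath p a : Set (Perm (Cube p a)))) := by
      rw [hQ, ← map_equiv_normalizer_eq, card_map_of_injective hψ]
    _ = (p - 1) ^ a * p ^ ((p ^ a - 1) / (p - 1)) := by
      rw [card_normalizer_iteratedWreath, Nat.totient_prime hp, Nat.geomSum_eq hp.two_le]

theorem card_normalizer_sylow_symmetric (p a : ℕ) (hp : p.Prime) (ha : 1 ≤ a)
    (q : ℕ) (hq : q = p ^ a) (P : Sylow p (Equiv.Perm (Fin q))) :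
    Nat.card (Subgroup.normalizer ((P : Subgroup (Equiv.Perm (Fin q))) : Set (Equiv.Perm (Fin q)))) =
      (p - 1) ^ a * p ^ ((p ^ a - 1) / (p - 1)) :=
  card_normalizer_sylow_symmetric_general p a hp q hq P
end

section
/- If g ∈ S_n has orbits O_1,...,O_k with sizes t_1,...,t_k such that t_1 = t_2, the sizes t_2, t_3, ..., t_k are pairwise distinct, and no t_i (i ≥ 2) equals 2t_1, then any nilpotent subgroup N of S_n containing g satisfies N ≤ Sym(O_1 ∪ O_2) × Sym(O_3) × ⋯ × Sym(O_k). -/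
/-!
Let `S = O₁ ∪ O₂` and let `K ≤ N` consist of the elements of `N` that preserve `S` and every
`g`-cycle outside `S`. As `g ∈ K`, the `K`-orbits are `O₁`, `O₂` or `S` inside `S`, and the
`g`-cycles outside `S`. An element of `N` normalizing `K` permutes the `K`-orbits and preserves
their sizes; since no `tᵢ` with `i ≥ 3` equals `t₁` or `2 t₁`, and the `tᵢ` with `i ≥ 3` are
pairwise distinct, it maps every cycle outside `S` to itself, hence lies in `K`. Nilpotent groups
satisfy the normalizer condition, so `K = N`.
-/

open Equiv MulAction

variable {α : Type*}

namespace Subgroup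

theorem le_of_inf_normalizer_le_of_isNilpotent {G : Type*} [Group G]
    {H N : Subgroup G} (hN : Group.IsNilpotent N) (hHN : H ≤ N)
    (hH : N ⊓ normalizer H ≤ H) : N ≤ H := by
  by_contra hNH
  have hlt : H.subgroupOf N < ⊤ :=
    lt_top_iff_ne_top.mpr fun htop => hNH (subgroupOf_eq_top.mp htop)
  have hnorm := Group.normalizerCondition_of_isNilpotent _ hlt
  rw [← subgroupOf_normalizer_eq hHN] at hnorm
  exact hnorm.not_ge fun η hη => hH ⟨η.2, hη⟩

end Subgroup

namespace Setoid

def classwisePerm (r : Setoid α) : Subgroup (Perm α) where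
  carrier := {σ | ∀ x, r x (σ x)}
  one_mem' := r.refl
  mul_mem' hσ hτ x := r.trans (hτ x) (hσ _)
  inv_mem' {σ} hσ x := by simpa using r.symm (hσ (σ⁻¹ x))

end Setoid

lemma MulAction.mem_orbit_subgroup_perm_iff {K : Subgroup (Perm α)} {x y : α} :
    y ∈ orbit K x ↔ ∃ c ∈ K, c x = y := by
  simp [mem_orbit_iff, Subgroup.smul_def, Perm.smul_def]

lemma MulAction.orbit_apply_of_mem_normalizer {K : Subgroup (Perm α)} {σ : Perm α}
    (hσ : σ ∈ Subgroup.normalizer K) (x : α) : orbit K (σ x) = σ '' orbit K x := by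
  ext y
  simp only [mem_orbit_subgroup_perm_iff, Set.mem_image, exists_exists_and_eq_and]
  constructor
  · rintro ⟨c, hc, rfl⟩
    exact ⟨σ⁻¹ * c * σ, (Subgroup.mem_normalizer_iff''.mp hσ c).mp hc, by simp⟩
  · rintro ⟨c, hc, rfl⟩
    exact ⟨σ * c * σ⁻¹, (Subgroup.mem_normalizer_iff.mp hσ c).mp hc, by simp⟩

lemma MulAction.card_orbit_apply_of_mem_normalizer {K : Subgroup (Perm α)} {σ : Perm α}
    (hσ : σ ∈ Subgroup.normalizer K) (x : α) :
    Nat.card (orbit K (σ x)) = Nat.card (orbit K x) := by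
  rw [MulAction.orbit_apply_of_mem_normalizer hσ, Nat.card_image_of_injective σ.injective]

namespace Equiv.Perm

lemma mem_orbit_of_sameCycle {g : Perm α} {K : Subgroup (Perm α)} (hg : g ∈ K) {x y z : α}
    (hy : y ∈ orbit K x) (hyz : g.SameCycle y z) : z ∈ orbit K x := by
  obtain ⟨c, hc, rfl⟩ := mem_orbit_subgroup_perm_iff.mp hy
  obtain ⟨i, rfl⟩ := hyz
  exact mem_orbit_subgroup_perm_iff.mpr ⟨g ^ i * c, mul_mem (zpow_mem hg i) hc, rfl⟩

/-- The partition of `α` into `S` and the traces on `Sᶜ` of the `g`-cycles. -/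
def mergeCycles (g : Perm α) (S : Set α) : Setoid α where
  r x y := (x ∈ S ↔ y ∈ S) ∧ (x ∉ S → g.SameCycle x y)
  iseqv :=
    { refl _ := ⟨Iff.rfl, fun _ => SameCycle.refl _ _⟩
      symm := fun ⟨hS, hc⟩ => ⟨hS.symm, fun hy => (hc (hS.not.mpr hy)).symm⟩
      trans := fun ⟨hS, hc⟩ ⟨hS', hc'⟩ =>
        ⟨hS.trans hS', fun hx => (hc hx).trans (hc' (hS.not.mp hx))⟩ }

section mergeCycles

variable {g : Perm α} {S : Set α} (hS : ∀ ⦃x y⦄, g.SameCycle x y → x ∈ S → y ∈ S)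
include hS

lemma self_mem_classwisePerm_mergeCycles : g ∈ (g.mergeCycles S).classwisePerm := fun x =>
  have hx : g.SameCycle x (g x) := ⟨1, rfl⟩
  ⟨⟨hS hx, hS hx.symm⟩, fun _ => hx⟩

lemma mem_classwisePerm_mergeCycles_of_sameCycle {σ : Perm α}
    (hσ : ∀ x ∉ S, g.SameCycle x (σ x)) (hσ' : ∀ x ∉ S, g.SameCycle x (σ⁻¹ x)) :
    σ ∈ (g.mergeCycles S).classwisePerm := by
  refine fun x => ⟨⟨fun hx => ?_, fun hσx => ?_⟩, hσ x⟩
  · by_contra hσx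
    exact hσx (hS (hσ' _ hσx).symm (by simpa using hx))
  · by_contra hx
    exact hx (hS (hσ x hx).symm hσx)

end mergeCycles

section orbit

variable {g : Perm α} {S : Set α} {K : Subgroup (Perm α)}
  (hgK : g ∈ K) (hK : K ≤ (g.mergeCycles S).classwisePerm)
include hK

lemma orbit_subset_of_mem {x : α} (hx : x ∈ S) : orbit K x ⊆ S := by
  intro y hy
  obtain ⟨c, hc, rfl⟩ := mem_orbit_subgroup_perm_iff.mp hy
  exact ((hK hc x).1).mp hx

include hgK in
lemma orbit_eq_setOf_sameCycle_of_notMem {x : α} (hx : x ∉ S) :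
    orbit K x = {y | g.SameCycle x y} := by
  refine subset_antisymm (fun y hy => ?_) (fun y hy => ?_)
  · obtain ⟨c, hc, rfl⟩ := mem_orbit_subgroup_perm_iff.mp hy
    exact (hK hc x).2 hx
  · exact mem_orbit_of_sameCycle hgK (mem_orbit_self x) hy

end orbit

lemma card_eq_or_eq_two_mul_of_subset_union [Finite α] {g : Perm α} {a b : α}
    (hab : ¬ g.SameCycle a b)
    (hcard : Nat.card {z // g.SameCycle a z} = Nat.card {z // g.SameCycle b z})
    {T : Set α} (hT : ∀ ⦃y z⦄, y ∈ T → g.SameCycle y z → z ∈ T)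
    (hTab : T ⊆ {z | g.SameCycle a z ∨ g.SameCycle b z}) (hne : T.Nonempty) :
    Nat.card T = Nat.card {z // g.SameCycle b z} ∨
      Nat.card T = 2 * Nat.card {z // g.SameCycle a z} := by
  have hmem : ∀ z, z ∈ T ↔ (a ∈ T ∧ g.SameCycle a z) ∨ (b ∈ T ∧ g.SameCycle b z) := by
    refine fun z => ⟨fun hz => ?_, ?_⟩
    · exact (hTab hz).imp (fun h => ⟨hT hz h.symm, h⟩) (fun h => ⟨hT hz h.symm, h⟩)
    · rintro (⟨ha, h⟩ | ⟨hb, h⟩) <;> exact hT ‹_› h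
  by_cases ha : a ∈ T <;> by_cases hb : b ∈ T
  · right
    have hdisj : _root_.Disjoint ({z | g.SameCycle a z} : Set α) {z | g.SameCycle b z} :=
      Set.disjoint_left.mpr fun z hza hzb => hab (hza.trans hzb.symm)
    rw [show T = {z | g.SameCycle a z} ∪ {z | g.SameCycle b z} from
      Set.ext fun z => (hmem z).trans (by simp [ha, hb]), Nat.card_coe_set_eq,
      Set.ncard_union_eq hdisj, ← Nat.card_coe_set_eq, ← Nat.card_coe_set_eq]
    change Nat.card {z // g.SameCycle a z} + Nat.card {z // g.SameCycle b z} = _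
    omega
  · left
    rw [← hcard, show T = {z | g.SameCycle a z} from
      Set.ext fun z => (hmem z).trans (by simp [ha, hb])]
    rfl
  · left
    rw [show T = {z | g.SameCycle b z} from Set.ext fun z => (hmem z).trans (by simp [ha, hb])]
    rfl
  · obtain ⟨z, hz⟩ := hne
    simp [hmem z, ha, hb] at hz

section normalizer

variable [Finite α] {g : Perm α} {a b : α} (hab : ¬ g.SameCycle a b)
  (hcard : Nat.card {z // g.SameCycle a z} = Nat.card {z // g.SameCycle b z})
  (hdist : ∀ x y : α, ¬ g.SameCycle a x → ¬ g.SameCycle a y →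
    Nat.card {z // g.SameCycle x z} = Nat.card {z // g.SameCycle y z} → g.SameCycle x y)
  (hnotdouble : ∀ x : α,
    Nat.card {z // g.SameCycle x z} ≠ 2 * Nat.card {z // g.SameCycle a z})
  {K : Subgroup (Perm α)} (hgK : g ∈ K)
  (hK : K ≤ (g.mergeCycles {z | g.SameCycle a z ∨ g.SameCycle b z}).classwisePerm)
include hab hcard hdist hnotdouble hgK hK

lemma sameCycle_apply_of_mem_normalizer {σ : Perm α} (hσ : σ ∈ Subgroup.normalizer K)
    {x : α} (hxa : ¬ g.SameCycle a x) (hxb : ¬ g.SameCycle b x) : g.SameCycle x (σ x) := by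
  have hx : x ∉ {z | g.SameCycle a z ∨ g.SameCycle b z} := not_or.mpr ⟨hxa, hxb⟩
  have horb : Nat.card (orbit K (σ x)) = Nat.card {z // g.SameCycle x z} := by
    rw [card_orbit_apply_of_mem_normalizer hσ, orbit_eq_setOf_sameCycle_of_notMem hgK hK hx]
    rfl
  by_cases hσx : σ x ∈ {z | g.SameCycle a z ∨ g.SameCycle b z}
  · exfalso
    rcases card_eq_or_eq_two_mul_of_subset_union hab hcard
      (fun _ _ hy => mem_orbit_of_sameCycle hgK hy) (orbit_subset_of_mem hK hσx)
      (nonempty_orbit _) with h | h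
    · exact hxb (hdist x b hxa hab (horb.symm.trans h)).symm
    · exact hnotdouble x (horb.symm.trans h)
  · refine hdist x (σ x) hxa (fun h => hσx (Or.inl h)) ?_
    rw [← horb, orbit_eq_setOf_sameCycle_of_notMem hgK hK hσx]
    rfl

lemma mem_classwisePerm_of_mem_normalizer {σ : Perm α} (hσ : σ ∈ Subgroup.normalizer K) :
    σ ∈ (g.mergeCycles {z | g.SameCycle a z ∨ g.SameCycle b z}).classwisePerm := by
  refine mem_classwisePerm_mergeCycles_of_sameCycle
    (fun x y hxy hx => hx.imp (·.trans hxy) (·.trans hxy)) ?_ ?_ <;>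
  refine fun x hx => sameCycle_apply_of_mem_normalizer hab hcard hdist hnotdouble hgK hK
    ?_ (fun h => hx (Or.inl h)) (fun h => hx (Or.inr h))
  exacts [hσ, inv_mem hσ]

end normalizer

end Equiv.Perm

theorem nilpotent_stabilizes_orbits_two_equal {n : ℕ} (g : Equiv.Perm (Fin n))
    (a b : Fin n) (hab : ¬ g.SameCycle a b)
    (hcard : Nat.card {z : Fin n // g.SameCycle a z} =
      Nat.card {z : Fin n // g.SameCycle b z})
    (hdist : ∀ x y : Fin n, ¬ g.SameCycle a x → ¬ g.SameCycle a y →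
      Nat.card {z : Fin n // g.SameCycle x z} = Nat.card {z : Fin n // g.SameCycle y z} →
        g.SameCycle x y)
    (hnotdouble : ∀ x : Fin n,
      Nat.card {z : Fin n // g.SameCycle x z} ≠
        2 * Nat.card {z : Fin n // g.SameCycle a z})
    (N : Subgroup (Equiv.Perm (Fin n))) (hN : Group.IsNilpotent N) (hgN : g ∈ N) :
    ∀ h ∈ N, ∀ x : Fin n,
      ((g.SameCycle a x ∨ g.SameCycle b x) →
        (g.SameCycle a (h x) ∨ g.SameCycle b (h x))) ∧
      (¬ g.SameCycle a x → ¬ g.SameCycle b x → g.SameCycle x (h x)) := by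
  set K := (g.mergeCycles {z | g.SameCycle a z ∨ g.SameCycle b z}).classwisePerm ⊓ N
  have hgK : g ∈ K := ⟨Equiv.Perm.self_mem_classwisePerm_mergeCycles
    fun _ _ hxy hx => hx.imp (·.trans hxy) (·.trans hxy), hgN⟩
  have hNK : N ≤ K :=
    Subgroup.le_of_inf_normalizer_le_of_isNilpotent hN inf_le_right fun _ ⟨hσN, hσ⟩ =>
      ⟨Equiv.Perm.mem_classwisePerm_of_mem_normalizer hab hcard hdist hnotdouble hgK
        inf_le_left hσ, hσN⟩
  intro h hh x
  obtain ⟨hS, hcyc⟩ := (hNK hh).1 x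
  exact ⟨hS.mp, fun hxa hxb => hcyc (not_or.mpr ⟨hxa, hxb⟩)⟩
end

section
/- If two elements g, h of A_9 each have cycle type 4²1¹ (two 4-cycles and one fixed point) but have different fixed points, then the subgroup ⟨g, h⟩ is not nilpotent. -/
theorem not_nilpotent_of_different_fixed_points (g h : Equiv.Perm (Fin 9))
    (hg : g.cycleType = {4, 4}) (hh : h.cycleType = {4, 4})
    (α β : Fin 9) (hgα : g α = α) (hhβ : h β = β) (hαβ : α ≠ β) :
    ¬ Group.IsNilpotent (Subgroup.closure ({g, h} : Set (Equiv.Perm (Fin 9)))) := by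
  intro hnil
  classical
  set G := Subgroup.closure ({g, h} : Set (Equiv.Perm (Fin 9))) with hGdef
  have hginG : g ∈ G := Subgroup.subset_closure (by simp)
  have hhinG : h ∈ G := Subgroup.subset_closure (by simp)
  haveI : Fact (Nat.Prime 2) := ⟨Nat.prime_two⟩
  -- g and h have order 4
  have hog : orderOf g = 4 := by
    rw [← Equiv.Perm.lcm_cycleType, hg]; decide
  have hoh : orderOf h = 4 := by
    rw [← Equiv.Perm.lcm_cycleType, hh]; decide
  set g' : G := ⟨g, hginG⟩ with hg'
  set h' : G := ⟨h, hhinG⟩ with hh'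
  have hog' : orderOf g' = 4 := by
    rw [← hog]
    exact (orderOf_injective G.subtype (Subgroup.subtype_injective G) g').symm
  have hoh' : orderOf h' = 4 := by
    rw [← hoh]
    exact (orderOf_injective G.subtype (Subgroup.subtype_injective G) h').symm
  -- ⟨g'⟩ and ⟨h'⟩ are 2-groups
  have hpg : IsPGroup 2 (Subgroup.zpowers g') :=
    IsPGroup.of_card (n := 2) (by rw [Nat.card_zpowers, hog']; norm_num)
  have hph : IsPGroup 2 (Subgroup.zpowers h') :=
    IsPGroup.of_card (n := 2) (by rw [Nat.card_zpowers, hoh']; norm_num)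
  obtain ⟨Qg, hQg⟩ := hpg.exists_le_sylow
  obtain ⟨Qh, hQh⟩ := hph.exists_le_sylow
  -- by nilpotency, Sylow 2-subgroups are normal, hence unique
  have hnorm : (Qg : Subgroup G).Normal :=
    Sylow.normal_of_normalizerCondition (normalizerCondition_of_isNilpotent) Qg
  haveI := Sylow.unique_of_normal Qg hnorm
  have hQeq : Qh = Qg := Subsingleton.elim _ _
  -- g', h' ∈ Qg, so Qg = ⊤, so G is a 2-group
  have hg'Q : g' ∈ Qg := hQg (Subgroup.mem_zpowers g')
  have hh'Q : h' ∈ Qg := hQeq ▸ hQh (Subgroup.mem_zpowers h')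
  have htop : (⊤ : Subgroup G) ≤ (Qg : Subgroup G) := by
    rw [← Subgroup.closure_closure_coe_preimage (k := ({g, h} : Set (Equiv.Perm (Fin 9))))]
    rw [Subgroup.closure_le]
    rintro x hx
    rcases hx with hx | hx
    · have : x = g' := Subtype.ext hx
      rw [this]; exact hg'Q
    · have : x = h' := Subtype.ext hx
      rw [this]; exact hh'Q
  have hsurj : Function.Surjective ((Qg : Subgroup G).subtype) := by
    intro x
    exact ⟨⟨x, htop (Subgroup.mem_top x)⟩, rfl⟩
  have hGp : IsPGroup 2 G := Qg.isPGroup'.of_surjective _ hsurj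
  -- a 2-group acting on a 9-element set has a fixed point
  have hfix := hGp.nonempty_fixed_point_of_prime_not_dvd_card (Fin 9)
    (by rw [Nat.card_eq_fintype_card]; decide)
  obtain ⟨a, ha⟩ := hfix
  have hga : g a = a := ha g'
  have hha : h a = a := ha h'
  -- g fixes only α
  have hscard : ∀ (f : Equiv.Perm (Fin 9)), f.cycleType = {4, 4} → f.supportᶜ.card = 1 := by
    intro f hf
    have : f.support.card = 8 := by
      rw [← Equiv.Perm.sum_cycleType, hf]; decide
    rw [Finset.card_compl, this]; decide
  have haα : a = α := by
    have h1 := hscard g hg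
    exact Finset.card_le_one.mp h1.le a
      (by simp [Equiv.Perm.notMem_support, hga]) α
      (by simp [Equiv.Perm.notMem_support, hgα])
  have haβ : a = β := by
    have h1 := hscard h hh
    exact Finset.card_le_one.mp h1.le a
      (by simp [Equiv.Perm.notMem_support, hha]) β
      (by simp [Equiv.Perm.notMem_support, hhβ])
  exact hαβ (haα ▸ haβ)
end
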